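/- arXiv:2410.20615 — 5 statements merged into one kernel-verified Lean document; each statement's English description precedes it below -/
import Mathlib

section
/- (Domain inverse inequality.) Let T ⊂ ℝⁿ be a nonempty bounded open set, let k ∈ ℕ, let ρ₀ > 0, and let Φ : ℝⁿ → ℝ be a measurable function with Φ(x) ≥ 0 for all x ∈ T and Φ(x) ≥ ρ₀ for all x in some nonempty open subset T̂ ⊆ T. Then there exists a constant C > 0, depending only on n, k, T, T̂ and ρ₀, such that ∫_T Φ(x) p(x)² dx ≥ C ∫_T p(x)² dx for every polynomial function p of total degree at most k on ℝⁿ. -/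
open MeasureTheory MvPolynomial

namespace Stmt5Aux

variable {n : ℕ}

noncomputable def pf (P : MvPolynomial (Fin n) ℝ) (x : EuclideanSpace ℝ (Fin n)) : ℝ :=
  eval (fun i => x i) P

lemma continuous_pf (P : MvPolynomial (Fin n) ℝ) : Continuous (pf P) := by
  have h1 : Continuous fun x : EuclideanSpace ℝ (Fin n) => (fun i => x i : Fin n → ℝ) :=
    continuous_pi fun i => (EuclideanSpace.proj i).continuous
  exact (MvPolynomial.continuous_eval P).comp h1

lemma pf_eq_zero {That : Set (EuclideanSpace ℝ (Fin n))} (hThatne : That.Nonempty)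
    (hThato : IsOpen That) (P : MvPolynomial (Fin n) ℝ)
    (h : ∀ x ∈ That, pf P x = 0) : P = 0 := by
  have hA : AnalyticOnNhd ℝ (pf P) Set.univ :=
    AnalyticOnNhd.eval_continuousLinearMap
      ((PiLp.continuousLinearEquiv 2 ℝ (fun _ : Fin n => ℝ)).toContinuousLinearMap) P
  obtain ⟨z, hz⟩ := hThatne
  have hev : pf P =ᶠ[nhds z] 0 := Filter.eventuallyEq_of_mem (hThato.mem_nhds hz) h
  have hzero : Set.EqOn (pf P) 0 Set.univ :=
    hA.eqOn_zero_of_preconnected_of_eventuallyEq_zero isPreconnected_univ (Set.mem_univ z) hev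
  apply MvPolynomial.funext
  intro y
  simpa [pf] using hzero (Set.mem_univ ((WithLp.equiv 2 (Fin n → ℝ)).symm y))

lemma integrableOn_mul {T : Set (EuclideanSpace ℝ (Fin n))} (hTb : Bornology.IsBounded T)
    (P Q : MvPolynomial (Fin n) ℝ) :
    IntegrableOn (fun x => pf P x * pf Q x) T volume := by
  have hK : IsCompact (closure T) := hTb.isCompact_closure
  have : IntegrableOn (fun x => pf P x * pf Q x) (closure T) volume :=
    (((continuous_pf P).mul (continuous_pf Q)).continuousOn).integrableOn_compact hK
  exact this.mono_set subset_closure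

lemma pos_integral {That : Set (EuclideanSpace ℝ (Fin n))} (hThatne : That.Nonempty)
    (hThato : IsOpen That) (hThatb : Bornology.IsBounded That)
    (P : MvPolynomial (Fin n) ℝ) (hP : P ≠ 0) :
    0 < ∫ x in That, (pf P x) ^ 2 := by
  have hnn : 0 ≤ᵐ[volume.restrict That] fun x => (pf P x) ^ 2 :=
    Filter.Eventually.of_forall fun x => sq_nonneg _
  have hint : IntegrableOn (fun x => (pf P x) ^ 2) That volume := by
    simpa [pow_two] using integrableOn_mul hThatb P P
  rw [setIntegral_pos_iff_support_of_nonneg_ae hnn hint]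
  have : ¬ ∀ x ∈ That, pf P x = 0 := fun h => hP (pf_eq_zero hThatne hThato P h)
  push_neg at this
  obtain ⟨x₀, hx₀T, hx₀⟩ := this
  set U : Set (EuclideanSpace ℝ (Fin n)) := That ∩ (pf P) ⁻¹' {0}ᶜ with hU
  have hUo : IsOpen U := hThato.inter ((isOpen_compl_singleton).preimage (continuous_pf P))
  have hUne : U.Nonempty := ⟨x₀, hx₀T, hx₀⟩
  have hsub : U ⊆ (Function.support fun x => (pf P x) ^ 2) ∩ That := by
    rintro x ⟨hx1, hx2⟩
    exact ⟨pow_ne_zero 2 hx2, hx1⟩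
  calc 0 < volume U := hUo.measure_pos volume hUne
    _ ≤ _ := measure_mono hsub

end Stmt5Aux

open Stmt5Aux

set_option maxHeartbeats 4000000 in
set_option synthInstance.maxHeartbeats 200000 in
/-- Domain inverse inequality: if a nonnegative measurable weight `Φ` is bounded below by
`ρ₀ > 0` on a nonempty open subset `T̂` of the nonempty bounded open set `T ⊂ ℝⁿ`, then
`∫_T Φ p² ≥ C ∫_T p²` uniformly over all polynomials `p` of total degree at most `k`. -/
theorem stmt5 (n k : ℕ) (T That : Set (EuclideanSpace ℝ (Fin n)))
    (hTne : T.Nonempty) (hTo : IsOpen T) (hTb : Bornology.IsBounded T)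
    (ρ₀ : ℝ) (hρ₀ : 0 < ρ₀)
    (Φ : EuclideanSpace ℝ (Fin n) → ℝ) (hΦm : Measurable Φ)
    (hΦ0 : ∀ x ∈ T, 0 ≤ Φ x)
    (hThatne : That.Nonempty) (hThato : IsOpen That) (hThatT : That ⊆ T)
    (hΦρ : ∀ x ∈ That, ρ₀ ≤ Φ x) :
    ∃ C : ℝ, 0 < C ∧ ∀ P : MvPolynomial (Fin n) ℝ, P.totalDegree ≤ k →
      ENNReal.ofReal C *
          ∫⁻ x in T, ENNReal.ofReal ((MvPolynomial.eval (fun i => x i) P) ^ 2) ≤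
        ∫⁻ x in T, ENNReal.ofReal (Φ x * (MvPolynomial.eval (fun i => x i) P) ^ 2) := by
  classical
  set V := MvPolynomial.restrictTotalDegree (Fin n) ℝ k with hV
  haveI : Nontrivial V := by
    refine ⟨⟨1, ?_⟩, 0, ?_⟩
    · rw [MvPolynomial.mem_restrictTotalDegree]
      simp [MvPolynomial.totalDegree_one]
    · intro h
      exact one_ne_zero (congrArg Subtype.val h)
  set d := Module.finrank ℝ V with hd
  have hd0 : 0 < d := Module.finrank_pos
  set b : Module.Basis (Fin d) ℝ V := Module.finBasis ℝ V with hb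
  set e : Fin d → EuclideanSpace ℝ (Fin n) → ℝ := fun i => pf (b i : MvPolynomial (Fin n) ℝ)
    with he
  have hThatb : Bornology.IsBounded That := hTb.subset hThatT
  -- quadratic forms
  set Q : Set (EuclideanSpace ℝ (Fin n)) → (Fin d → ℝ) → ℝ :=
    fun s c => ∫ x in s, (∑ i, c i * e i x) ^ 2 with hQ
  -- expansion lemma
  have expand : ∀ (s : Set (EuclideanSpace ℝ (Fin n))), Bornology.IsBounded s →
      ∀ c : Fin d → ℝ, Q s c = ∑ i, ∑ j, c i * c j * ∫ x in s, e i x * e j x := by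
    intro s hs c
    have hpt : ∀ x : EuclideanSpace ℝ (Fin n),
        (∑ i, c i * e i x) ^ 2 = ∑ i, ∑ j, c i * c j * (e i x * e j x) := by
      intro x
      rw [sq, Finset.sum_mul_sum]
      exact Finset.sum_congr rfl fun i _ => Finset.sum_congr rfl fun j _ => by ring
    have hint : ∀ i j : Fin d,
        IntegrableOn (fun x => c i * c j * (e i x * e j x)) s volume := fun i j =>
      (integrableOn_mul hs _ _).const_mul _
    calc Q s c = ∫ x in s, ∑ i, ∑ j, c i * c j * (e i x * e j x) := by
          simp only [hQ]; exact integral_congr_ae (Filter.Eventually.of_forall hpt)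
      _ = ∑ i, ∑ j, c i * c j * ∫ x in s, e i x * e j x := by
          rw [integral_finset_sum _ fun i _ => integrable_finset_sum _ fun j _ => hint i j]
          exact Finset.sum_congr rfl fun i _ => by
              rw [integral_finset_sum _ fun j _ => hint i j]
              exact Finset.sum_congr rfl fun j _ => integral_const_mul _ _
  -- continuity of the quadratic forms
  have hQcont : ∀ (s : Set (EuclideanSpace ℝ (Fin n))), Bornology.IsBounded s →
      Continuous (Q s) := by
    intro s hs
    have : Q s = fun c => ∑ i, ∑ j, c i * c j * ∫ x in s, e i x * e j x := funext (expand s hs)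
    rw [this]
    continuity
  -- homogeneity
  have hQhom : ∀ (s : Set (EuclideanSpace ℝ (Fin n))) (t : ℝ) (c : Fin d → ℝ),
      Q s (t • c) = t ^ 2 * Q s c := by
    intro s t c
    have hpt : ∀ x : EuclideanSpace ℝ (Fin n),
        (∑ i, (t • c) i * e i x) ^ 2 = t ^ 2 * (∑ i, c i * e i x) ^ 2 := by
      intro x
      rw [show ∑ i, (t • c) i * e i x = t * ∑ i, c i * e i x by
        rw [Finset.mul_sum]; exact Finset.sum_congr rfl fun i _ => by simp [mul_assoc],
        mul_pow]
    simp only [hQ, hpt, integral_const_mul]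
  -- nonnegativity
  have hQnonneg : ∀ (s : Set (EuclideanSpace ℝ (Fin n))) (c : Fin d → ℝ), 0 ≤ Q s c :=
    fun s c => integral_nonneg fun x => sq_nonneg _
  -- positive definiteness on That
  have hQpos : ∀ c : Fin d → ℝ, c ≠ 0 → 0 < Q That c := by
    intro c hc
    set p : V := ∑ i, c i • b i with hp
    have hpe : b.equivFun.symm c = p := by rw [Module.Basis.equivFun_symm_apply]
    have hpne : p ≠ 0 := by
      intro h
      apply hc
      have h2 : b.equivFun.symm c = 0 := by rw [hpe]; exact h
      have h3 := congrArg b.equivFun h2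
      rw [LinearEquiv.apply_symm_apply, map_zero] at h3
      exact h3
    have hpne' : (p : MvPolynomial (Fin n) ℝ) ≠ 0 := by
      simpa [Submodule.coe_eq_zero] using hpne
    have hpf : ∀ x, pf (p : MvPolynomial (Fin n) ℝ) x = ∑ i, c i * e i x := by
      intro x
      have hcoe : (p : MvPolynomial (Fin n) ℝ) = ∑ i, c i • (b i : MvPolynomial (Fin n) ℝ) := by
        simp [hp]
      rw [hcoe]
      simp [pf, he, map_sum, MvPolynomial.smul_eq_C_mul]
    have hpos := pos_integral hThatne hThato hThatb _ hpne'
    have : ∫ x in That, (pf (p : MvPolynomial (Fin n) ℝ) x) ^ 2 = Q That c := by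
      simp only [hQ]
      exact integral_congr_ae (Filter.Eventually.of_forall fun x => by simp only [hpf])
    linarith [this ▸ hpos]
  -- compact sphere
  haveI : Nonempty (Fin d) := Fin.pos_iff_nonempty.mp hd0
  set S := Metric.sphere (0 : Fin d → ℝ) 1 with hS
  have hScomp : IsCompact S := isCompact_sphere 0 1
  have hSne : S.Nonempty := NormedSpace.sphere_nonempty.mpr zero_le_one
  obtain ⟨c₀, hc₀S, hmin⟩ := hScomp.exists_isMinOn hSne ((hQcont That hThatb).continuousOn)
  obtain ⟨c₁, hc₁S, hmax⟩ := hScomp.exists_isMaxOn hSne ((hQcont T hTb).continuousOn)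
  set m := Q That c₀ with hm'
  set M := Q T c₁ with hM'
  have hm : 0 < m := by
    apply hQpos
    intro h
    rw [h, hS] at hc₀S
    simp at hc₀S
  have hM0 : 0 ≤ M := hQnonneg T c₁
  set C₀ := m / (M + 1) with hC₀
  have hC₀pos : 0 < C₀ := by positivity
  have keyS : ∀ c ∈ S, C₀ * Q T c ≤ Q That c := by
    intro c hcS
    have h1 : Q T c ≤ M := hmax hcS
    have h2 : m ≤ Q That c := hmin hcS
    have h3 : C₀ * Q T c ≤ C₀ * M := by
      exact mul_le_mul_of_nonneg_left h1 hC₀pos.le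
    have h4 : C₀ * M ≤ m := by
      rw [hC₀, div_mul_eq_mul_div, div_le_iff₀ (by linarith)]
      nlinarith
    linarith
  have key : ∀ c : Fin d → ℝ, C₀ * Q T c ≤ Q That c := by
    intro c
    by_cases hc : c = 0
    · have hz : ∀ s : Set (EuclideanSpace ℝ (Fin n)), Q s (0 : Fin d → ℝ) = 0 := by
        intro s; simp [hQ]
      rw [hc, hz, hz, mul_zero]
    · have ht : (0:ℝ) < ‖c‖ := norm_pos_iff.mpr hc
      set c' := ‖c‖⁻¹ • c with hc'
      have hc'S : c' ∈ S := by
        simp only [hS, Metric.mem_sphere, dist_zero_right, hc', norm_smul, norm_inv, norm_norm]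
        field_simp
      have hrec : c = ‖c‖ • c' := by rw [hc', smul_inv_smul₀ ht.ne']
      have h1 := keyS c' hc'S
      have hT2 : Q T c = ‖c‖ ^ 2 * Q T c' := by
        conv_lhs => rw [hrec]
        rw [hQhom]
      have hTh2 : Q That c = ‖c‖ ^ 2 * Q That c' := by
        conv_lhs => rw [hrec]
        rw [hQhom]
      rw [hT2, hTh2]
      calc C₀ * (‖c‖ ^ 2 * Q T c') = ‖c‖ ^ 2 * (C₀ * Q T c') := by ring
        _ ≤ ‖c‖ ^ 2 * Q That c' := mul_le_mul_of_nonneg_left h1 (sq_nonneg _)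
  -- conclusion
  refine ⟨ρ₀ * C₀, by positivity, ?_⟩
  intro P hPk
  set p : V := ⟨P, (MvPolynomial.mem_restrictTotalDegree _ _ _).mpr hPk⟩ with hp
  set c := b.equivFun p with hc
  have hpc : b.equivFun.symm c = p := by rw [hc]; exact b.equivFun.symm_apply_apply p
  have hPc : ∀ x, pf P x = ∑ i, c i * e i x := by
    intro x
    have hcoe : P = ∑ i, c i • (b i : MvPolynomial (Fin n) ℝ) := by
      have : ((∑ i, c i • b i : V) : MvPolynomial (Fin n) ℝ) = P := by
        rw [← Module.Basis.equivFun_symm_apply, hpc]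
      rw [← this]
      simp
    conv_lhs => rw [hcoe]
    simp [pf, he, map_sum, MvPolynomial.smul_eq_C_mul]
  have hQT : Q T c = ∫ x in T, pf P x ^ 2 := by
    simp only [hQ]
    exact integral_congr_ae (Filter.Eventually.of_forall fun x => by simp only [hPc])
  have hQThat : Q That c = ∫ x in That, pf P x ^ 2 := by
    simp only [hQ]
    exact integral_congr_ae (Filter.Eventually.of_forall fun x => by simp only [hPc])
  have hint_T : IntegrableOn (fun x => pf P x ^ 2) T volume := by
    simpa [pow_two] using integrableOn_mul hTb P P
  have hint_That : IntegrableOn (fun x => pf P x ^ 2) That volume := hint_T.mono_set hThatT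
  have hL : ∫⁻ x in T, ENNReal.ofReal (pf P x ^ 2) = ENNReal.ofReal (∫ x in T, pf P x ^ 2) :=
    (ofReal_integral_eq_lintegral_ofReal hint_T
      (Filter.Eventually.of_forall fun x => sq_nonneg _)).symm
  have key2 : C₀ * ∫ x in T, pf P x ^ 2 ≤ ∫ x in That, pf P x ^ 2 := by
    have := key c
    rw [hQT, hQThat] at this
    exact this
  show ENNReal.ofReal (ρ₀ * C₀) * ∫⁻ x in T, ENNReal.ofReal (pf P x ^ 2) ≤
      ∫⁻ x in T, ENNReal.ofReal (Φ x * pf P x ^ 2)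
  calc ENNReal.ofReal (ρ₀ * C₀) * ∫⁻ x in T, ENNReal.ofReal (pf P x ^ 2)
      = ENNReal.ofReal (ρ₀ * C₀ * ∫ x in T, pf P x ^ 2) := by
        rw [hL, ← ENNReal.ofReal_mul (by positivity)]
    _ ≤ ENNReal.ofReal (ρ₀ * ∫ x in That, pf P x ^ 2) := by
        apply ENNReal.ofReal_le_ofReal
        rw [mul_assoc]
        exact mul_le_mul_of_nonneg_left key2 hρ₀.le
    _ = ENNReal.ofReal (∫ x in That, ρ₀ * pf P x ^ 2) := by rw [integral_const_mul]
    _ = ∫⁻ x in That, ENNReal.ofReal (ρ₀ * pf P x ^ 2) :=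
        ofReal_integral_eq_lintegral_ofReal (hint_That.const_mul _)
          (Filter.Eventually.of_forall fun x => by positivity)
    _ ≤ ∫⁻ x in That, ENNReal.ofReal (Φ x * pf P x ^ 2) := by
        refine lintegral_mono_ae ?_
        rw [ae_restrict_iff' hThato.measurableSet]
        exact Filter.Eventually.of_forall fun x hx =>
          ENNReal.ofReal_le_ofReal (mul_le_mul_of_nonneg_right (hΦρ x hx) (sq_nonneg _))
    _ ≤ ∫⁻ x in T, ENNReal.ofReal (Φ x * pf P x ^ 2) :=
        lintegral_mono' (Measure.restrict_mono hThatT le_rfl) le_rfl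
end

section
/- (Inverse trace inequality for polynomials.) Let T ⊂ ℝⁿ be a nonempty bounded open set whose topological boundary ∂T has finite (n−1)-dimensional Hausdorff measure, and let k ∈ ℕ. Then there exists a constant C > 0, depending only on n, k and T, such that ∫_{∂T} p² dμH^{n−1} ≤ C ∫_T p² dx for every polynomial function p of total degree at most k on ℝⁿ. -/
open MeasureTheory

namespace Stmt6Aux

variable {n : ℕ}

noncomputable def pev (P : MvPolynomial (Fin n) ℝ) (x : EuclideanSpace ℝ (Fin n)) : ℝ :=
  MvPolynomial.eval (fun i => x i) P

lemma continuous_pev (P : MvPolynomial (Fin n) ℝ) : Continuous (pev P) := by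
  have h1 : Continuous fun x : EuclideanSpace ℝ (Fin n) => (fun i => x i) :=
    continuous_pi fun i => (continuous_apply i).comp (PiLp.continuous_ofLp 2 _)
  exact (MvPolynomial.continuous_eval (p := P)).comp h1

lemma eval_eq_zero_of_ball (a : EuclideanSpace ℝ (Fin n)) (r : ℝ) (hr : 0 < r)
    (P : MvPolynomial (Fin n) ℝ)
    (h : ∀ x ∈ Metric.ball a r, pev P x = 0) :
    ∀ x : EuclideanSpace ℝ (Fin n), pev P x = 0 := by
  intro x
  set q : Polynomial ℝ :=
    MvPolynomial.aeval (fun i => Polynomial.C (a i) + Polynomial.C (x i - a i) * Polynomial.X) P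
    with hqdef
  have hq : ∀ t : ℝ, q.eval t = MvPolynomial.eval (fun i => a i + t * (x i - a i)) P := by
    intro t
    have := MvPolynomial.comp_aeval
      (f := fun i => Polynomial.C (a i) + Polynomial.C (x i - a i) * Polynomial.X)
      (φ := Polynomial.aeval t (R := ℝ))
    have h2 := congrArg (fun ψ => ψ P) this
    simp only [AlgHom.coe_comp, Function.comp_apply] at h2
    have hfun : (fun i => (Polynomial.aeval t)
        (Polynomial.C (a i) + Polynomial.C (x i - a i) * Polynomial.X))
        = fun i => a i + t * (x i - a i) := by
      funext i; simp; ring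
    have h3 : (Polynomial.aeval t) q
        = MvPolynomial.aeval (fun i => a i + t * (x i - a i)) P := by
      rw [hqdef, h2, hfun]
    have h4 : (Polynomial.aeval t) q = q.eval t := by
      rw [Polynomial.coe_aeval_eq_eval]
    have h5 : MvPolynomial.aeval (fun i => a i + t * (x i - a i)) P
        = MvPolynomial.eval (fun i => a i + t * (x i - a i)) P := by
      rw [← MvPolynomial.coe_aeval_eq_eval]; rfl
    rw [← h4, h3, h5]
  set ε : ℝ := r / (‖x - a‖ + 1) with hεdef
  have hnorm : (0:ℝ) < ‖x - a‖ + 1 := by positivity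
  have hε : 0 < ε := div_pos hr hnorm
  have hroots : ∀ t ∈ Set.Ioo (0:ℝ) ε, q.IsRoot t := by
    intro t ht
    have ht0 : 0 < t := ht.1
    have htε : t < ε := ht.2
    have hmem : a + t • (x - a) ∈ Metric.ball a r := by
      rw [Metric.mem_ball, dist_eq_norm]
      have : a + t • (x - a) - a = t • (x - a) := by abel
      rw [this, norm_smul]
      have : ‖t‖ = t := abs_of_pos ht0
      rw [this]
      calc t * ‖x - a‖ ≤ t * (‖x - a‖ + 1) := by nlinarith [norm_nonneg (x - a)]
        _ < ε * (‖x - a‖ + 1) := by nlinarith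
        _ = r := by rw [hεdef, div_mul_cancel₀ _ hnorm.ne']
    have := h _ hmem
    unfold pev at this
    rw [Polynomial.IsRoot, hq t]
    rw [← this]
    congr 1
  have hq0 : q = 0 := by
    apply Polynomial.eq_zero_of_infinite_isRoot
    exact Set.Infinite.mono hroots (Set.Ioo_infinite hε)
  have := hq 1
  rw [hq0] at this
  simp at this
  unfold pev
  rw [← this]

end Stmt6Aux

open Stmt6Aux in
set_option maxHeartbeats 1000000 in
set_option synthInstance.maxHeartbeats 400000 in
/-- Inverse trace inequality for polynomials on a fixed bounded open set `T ⊂ ℝⁿ` whose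
boundary has finite `(n−1)`-dimensional Hausdorff measure:
`∫_{∂T} p² dμH^{n−1} ≤ C ∫_T p² dx` uniformly over all polynomials `p` of total degree
at most `k`. -/
theorem stmt6 (n k : ℕ) (T : Set (EuclideanSpace ℝ (Fin n)))
    (hTne : T.Nonempty) (hTo : IsOpen T) (hTb : Bornology.IsBounded T)
    (hfin : μH[(n : ℝ) - 1] (frontier T) < ⊤) :
    ∃ C : ℝ, 0 < C ∧ ∀ P : MvPolynomial (Fin n) ℝ, P.totalDegree ≤ k →
      ∫⁻ x in frontier T,
          ENNReal.ofReal ((MvPolynomial.eval (fun i => x i) P) ^ 2) ∂(μH[(n : ℝ) - 1]) ≤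
        ENNReal.ofReal C *
          ∫⁻ x in T, ENNReal.ofReal ((MvPolynomial.eval (fun i => x i) P) ^ 2) := by
  classical
  obtain ⟨a, ha⟩ := hTne
  obtain ⟨r, hr, hball⟩ := Metric.isOpen_iff.mp hTo a ha
  set μb : Measure (EuclideanSpace ℝ (Fin n)) := μH[(n : ℝ) - 1] with hμb
  have hfr_closed : IsClosed (frontier T) := isClosed_frontier
  have hfr_meas : MeasurableSet (frontier T) := hfr_closed.measurableSet
  have hcl_compact : IsCompact (closure T) := hTb.isCompact_closure
  have hfr_compact : IsCompact (frontier T) :=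
    hcl_compact.of_isClosed_subset hfr_closed frontier_subset_closure
  haveI hfinb : IsFiniteMeasure (μb.restrict (frontier T)) :=
    ⟨by rw [Measure.restrict_apply_univ]; exact hfin⟩
  have hvolT : volume T < ⊤ :=
    lt_of_le_of_lt (measure_mono subset_closure) hcl_compact.measure_lt_top
  haveI hfinT : IsFiniteMeasure (volume.restrict T) :=
    ⟨by rw [Measure.restrict_apply_univ]; exact hvolT⟩
  have hTmeas : MeasurableSet T := hTo.measurableSet
  -- integrability of products of polynomial functions
  have hIntB : ∀ P Q : MvPolynomial (Fin n) ℝ,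
      IntegrableOn (fun x => pev P x * pev Q x) (frontier T) μb := by
    intro P Q
    obtain ⟨M, hM⟩ := hfr_compact.exists_bound_of_continuousOn
      (((continuous_pev P).mul (continuous_pev Q)).continuousOn)
    exact (integrable_const M).mono'
      (((continuous_pev P).mul (continuous_pev Q)).aestronglyMeasurable)
      ((ae_restrict_iff' hfr_meas).mpr (Filter.Eventually.of_forall hM))
  have hIntT : ∀ P Q : MvPolynomial (Fin n) ℝ,
      IntegrableOn (fun x => pev P x * pev Q x) T := by
    intro P Q
    obtain ⟨M, hM⟩ := hcl_compact.exists_bound_of_continuousOn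
      (((continuous_pev P).mul (continuous_pev Q)).continuousOn)
    exact (integrable_const M).mono'
      (((continuous_pev P).mul (continuous_pev Q)).aestronglyMeasurable)
      ((ae_restrict_iff' hTmeas).mpr
        (Filter.Eventually.of_forall fun x hx => hM x (subset_closure hx)))
  -- finite-dimensional setup
  set V := MvPolynomial.restrictTotalDegree (Fin n) ℝ k with hV
  set d := Module.finrank ℝ V with hd
  set b : Module.Basis (Fin d) ℝ V := Module.finBasis ℝ V with hb
  set e : Fin d → MvPolynomial (Fin n) ℝ := fun i => (b i : MvPolynomial (Fin n) ℝ) with he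
  set q : (Fin d → ℝ) → MvPolynomial (Fin n) ℝ := fun c => ∑ i, c i • e i with hqdef
  have hpevq : ∀ (c : Fin d → ℝ) x, pev (q c) x = ∑ i, c i * pev (e i) x := by
    intro c x
    simp only [hqdef, pev, map_sum, MvPolynomial.smul_eval]
  -- quadratic-form expansion of the two integrals
  have hexp : ∀ (s : Set (EuclideanSpace ℝ (Fin n))) (μ' : Measure (EuclideanSpace ℝ (Fin n))),
      (∀ P Q, IntegrableOn (fun x => pev P x * pev Q x) s μ') →
      ∀ c : Fin d → ℝ, (∫ x in s, (pev (q c) x) ^ 2 ∂μ')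
        = ∑ i, ∑ j, c i * c j * (∫ x in s, pev (e i) x * pev (e j) x ∂μ') := by
    intro s μ' hI c
    have h1 : ∀ x, (pev (q c) x) ^ 2
        = ∑ i, ∑ j, (c i * c j) * (pev (e i) x * pev (e j) x) := by
      intro x
      rw [hpevq, sq, Finset.sum_mul_sum]
      refine Finset.sum_congr rfl fun i _ => Finset.sum_congr rfl fun j _ => by ring
    calc (∫ x in s, (pev (q c) x) ^ 2 ∂μ')
        = ∫ x in s, ∑ i, ∑ j, (c i * c j) * (pev (e i) x * pev (e j) x) ∂μ' := by
          simp_rw [h1]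
      _ = ∑ i, ∑ j, c i * c j * (∫ x in s, pev (e i) x * pev (e j) x ∂μ') := by
          rw [integral_finset_sum _ (fun i _ =>
            integrable_finset_sum _ (fun j _ => (hI (e i) (e j)).const_mul _))]
          refine Finset.sum_congr rfl fun i _ => ?_
          rw [integral_finset_sum _ (fun j _ => (hI (e i) (e j)).const_mul _)]
          exact Finset.sum_congr rfl fun j _ => integral_const_mul _ _
  set A : Fin d → Fin d → ℝ :=
    fun i j => ∫ x in frontier T, pev (e i) x * pev (e j) x ∂μb with hA
  set Bm : Fin d → Fin d → ℝ := fun i j => ∫ x in T, pev (e i) x * pev (e j) x with hBm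
  set f : (Fin d → ℝ) → ℝ := fun c => ∑ i, ∑ j, c i * c j * A i j with hfdef
  set g : (Fin d → ℝ) → ℝ := fun c => ∑ i, ∑ j, c i * c j * Bm i j with hgdef
  have hf : ∀ c, (∫ x in frontier T, (pev (q c) x) ^ 2 ∂μb) = f c :=
    fun c => hexp _ _ hIntB c
  have hg : ∀ c, (∫ x in T, (pev (q c) x) ^ 2) = g c :=
    fun c => hexp _ _ hIntT c
  have hcf : Continuous f := by
    refine continuous_finset_sum _ fun i _ => continuous_finset_sum _ fun j _ => ?_
    exact ((continuous_apply i).mul (continuous_apply j)).mul continuous_const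
  have hcg : Continuous g := by
    refine continuous_finset_sum _ fun i _ => continuous_finset_sum _ fun j _ => ?_
    exact ((continuous_apply i).mul (continuous_apply j)).mul continuous_const
  have hfnonneg : ∀ c, 0 ≤ f c := by
    intro c; rw [← hf c]; exact integral_nonneg fun x => sq_nonneg _
  have hgnonneg : ∀ c, 0 ≤ g c := by
    intro c; rw [← hg c]; exact integral_nonneg fun x => sq_nonneg _
  have hfhom : ∀ (t : ℝ) (c : Fin d → ℝ), f (t • c) = t ^ 2 * f c := by
    intro t c
    simp only [hfdef, Pi.smul_apply, smul_eq_mul, Finset.mul_sum]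
    exact Finset.sum_congr rfl fun i _ => Finset.sum_congr rfl fun j _ => by ring
  have hghom : ∀ (t : ℝ) (c : Fin d → ℝ), g (t • c) = t ^ 2 * g c := by
    intro t c
    simp only [hgdef, Pi.smul_apply, smul_eq_mul, Finset.mul_sum]
    exact Finset.sum_congr rfl fun i _ => Finset.sum_congr rfl fun j _ => by ring
  have hf0 : f 0 = 0 := by simp [hfdef]
  have hg0 : g 0 = 0 := by simp [hgdef]
  -- nondegeneracy of g
  have hqinj : ∀ c : Fin d → ℝ, q c = 0 → c = 0 := by
    intro c h0
    have hsum : ((b.equivFun.symm c : V) : MvPolynomial (Fin n) ℝ) = q c := by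
      rw [Module.Basis.equivFun_symm_apply]
      simp [hqdef, he]
    have h3 : (b.equivFun.symm c : V) = 0 := by
      apply Subtype.ext
      rw [hsum, h0]; rfl
    have h4 : b.equivFun.symm c = b.equivFun.symm 0 := by rw [h3, map_zero]
    exact b.equivFun.symm.injective h4
  have hgpos : ∀ c : Fin d → ℝ, c ≠ 0 → 0 < g c := by
    intro c hc
    rw [← hg c]
    have hqc0 : q c ≠ 0 := fun h0 => hc (hqinj c h0)
    have hex : ∃ y ∈ T, pev (q c) y ≠ 0 := by
      by_contra hno
      push_neg at hno
      have hz : ∀ x, pev (q c) x = 0 :=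
        eval_eq_zero_of_ball a r hr (q c) (fun x hx => hno x (hball hx))
      refine hqc0 (MvPolynomial.funext fun x => ?_)
      have := hz (WithLp.toLp 2 x)
      simpa [pev] using this
    obtain ⟨y, hyT, hy⟩ := hex
    have hInt2 : IntegrableOn (fun x => (pev (q c) x) ^ 2) T := by
      have := hIntT (q c) (q c)
      simpa only [← pow_two] using this
    rw [setIntegral_pos_iff_support_of_nonneg_ae
      (Filter.Eventually.of_forall fun x => sq_nonneg _) hInt2]
    -- positive measure of support ∩ T
    have hopen : IsOpen (T ∩ {x | pev (q c) x ≠ 0}) :=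
      hTo.inter (isOpen_ne_fun (continuous_pev (q c)) continuous_const)
    have hymem : y ∈ T ∩ {x | pev (q c) x ≠ 0} := ⟨hyT, hy⟩
    obtain ⟨ρ, hρ, hballρ⟩ := Metric.isOpen_iff.mp hopen y hymem
    calc (0 : ENNReal) < volume (Metric.ball y ρ) := Metric.measure_ball_pos volume y hρ
      _ ≤ volume (Function.support (fun x => (pev (q c) x) ^ 2) ∩ T) := by
          apply measure_mono
          intro z hz
          obtain ⟨hzT, hzne⟩ := hballρ hz
          exact ⟨by simp [Function.mem_support, pow_eq_zero_iff]; exact hzne, hzT⟩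
  -- the key finite-dimensional compactness bound
  have key : ∃ C : ℝ, 0 < C ∧ ∀ c : Fin d → ℝ, f c ≤ C * g c := by
    rcases (Metric.sphere (0 : Fin d → ℝ) 1).eq_empty_or_nonempty with hS | hS
    · refine ⟨1, one_pos, fun c => ?_⟩
      have hc : c = 0 := by
        by_contra hc
        have hnc : ‖c‖ ≠ 0 := norm_ne_zero_iff.mpr hc
        have : ‖c‖⁻¹ • c ∈ Metric.sphere (0 : Fin d → ℝ) 1 := by
          simp [norm_smul, abs_of_nonneg (inv_nonneg.mpr (norm_nonneg c)),
            inv_mul_cancel₀ hnc]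
        rw [hS] at this
        exact this
      rw [hc, hf0, hg0]; norm_num
    · have hK := isCompact_sphere (0 : Fin d → ℝ) 1
      obtain ⟨cM, hcM, hmax⟩ := hK.exists_isMaxOn hS hcf.continuousOn
      obtain ⟨cm, hcm, hmin⟩ := hK.exists_isMinOn hS hcg.continuousOn
      have hcm0 : cm ≠ 0 := by
        intro h0
        rw [h0] at hcm
        simp at hcm
      have hm0 : 0 < g cm := hgpos cm hcm0
      have hM0 : 0 ≤ f cM := hfnonneg cM
      refine ⟨f cM / g cm + 1, by positivity, fun c => ?_⟩
      rcases eq_or_ne c 0 with rfl | hc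
      · rw [hf0, hg0]; norm_num
      · have hnc : (0:ℝ) < ‖c‖ := norm_pos_iff.mpr hc
        set u : Fin d → ℝ := ‖c‖⁻¹ • c with hu
        have husphere : u ∈ Metric.sphere (0 : Fin d → ℝ) 1 := by
          simp [hu, norm_smul, abs_of_nonneg (inv_nonneg.mpr (norm_nonneg c)),
            inv_mul_cancel₀ hnc.ne']
        have hcu : c = ‖c‖ • u := by
          rw [hu, smul_smul, mul_inv_cancel₀ hnc.ne', one_smul]
        have h1 : f u ≤ f cM := hmax husphere
        have h2 : g cm ≤ g u := hmin husphere
        have h3 : f u ≤ (f cM / g cm + 1) * g u := by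
          have e1 : f cM / g cm * g cm = f cM := div_mul_cancel₀ _ hm0.ne'
          have hgu0 : 0 ≤ g u := hgnonneg u
          nlinarith [div_nonneg hM0 hm0.le]
        calc f c = ‖c‖ ^ 2 * f u := by rw [hcu, hfhom]; rw [← hcu]
          _ ≤ ‖c‖ ^ 2 * ((f cM / g cm + 1) * g u) := by nlinarith [sq_nonneg ‖c‖]
          _ = (f cM / g cm + 1) * (‖c‖ ^ 2 * g u) := by ring
          _ = (f cM / g cm + 1) * g c := by rw [← hghom, ← hcu]
  obtain ⟨C, hC, hkey⟩ := key
  refine ⟨C, hC, fun P hP => ?_⟩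
  have hPV : P ∈ V := (MvPolynomial.mem_restrictTotalDegree _ _ P).mpr hP
  set c : Fin d → ℝ := b.equivFun ⟨P, hPV⟩ with hc
  have hqcP : q c = P := by
    have h1 : b.equivFun.symm c = (⟨P, hPV⟩ : V) := b.equivFun.symm_apply_apply _
    have h2 : ((b.equivFun.symm c : V) : MvPolynomial (Fin n) ℝ) = q c := by
      rw [Module.Basis.equivFun_symm_apply]
      simp [hqdef, he]
    rw [← h2, h1]
  have hsqB : IntegrableOn (fun x => (pev P x) ^ 2) (frontier T) μb := by
    have := hIntB P P
    simpa only [← pow_two] using this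
  have hsqT : IntegrableOn (fun x => (pev P x) ^ 2) T := by
    have := hIntT P P
    simpa only [← pow_two] using this
  have hLB : (∫⁻ x in frontier T,
      ENNReal.ofReal ((MvPolynomial.eval (fun i => x i) P) ^ 2) ∂μb)
      = ENNReal.ofReal (f c) := by
    have h1 : (∫⁻ x in frontier T, ENNReal.ofReal ((pev P x) ^ 2) ∂μb)
        = ENNReal.ofReal (∫ x in frontier T, (pev P x) ^ 2 ∂μb) :=
      (ofReal_integral_eq_lintegral_ofReal hsqB
        (Filter.Eventually.of_forall fun x => sq_nonneg _)).symm
    rw [show (∫⁻ x in frontier T,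
        ENNReal.ofReal ((MvPolynomial.eval (fun i => x i) P) ^ 2) ∂μb)
        = ∫⁻ x in frontier T, ENNReal.ofReal ((pev P x) ^ 2) ∂μb from rfl, h1, ← hqcP, hf]
  have hLT : (∫⁻ x in T, ENNReal.ofReal ((MvPolynomial.eval (fun i => x i) P) ^ 2))
      = ENNReal.ofReal (g c) := by
    have h1 : (∫⁻ x in T, ENNReal.ofReal ((pev P x) ^ 2))
        = ENNReal.ofReal (∫ x in T, (pev P x) ^ 2) :=
      (ofReal_integral_eq_lintegral_ofReal hsqT
        (Filter.Eventually.of_forall fun x => sq_nonneg _)).symm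
    rw [show (∫⁻ x in T, ENNReal.ofReal ((MvPolynomial.eval (fun i => x i) P) ^ 2))
        = ∫⁻ x in T, ENNReal.ofReal ((pev P x) ^ 2) from rfl, h1, ← hqcP, hg]
  rw [hLB, hLT, ← ENNReal.ofReal_mul hC.le]
  exact ENNReal.ofReal_le_ofReal (hkey c)
end

section
/- (Curl bound by the discrete weak curl on a single polyhedral element, Lemma 5.1 of the paper.) Let T ⊂ ℝ³ be a nonempty bounded open set with μH²(∂T) < ∞, and let l₁, …, l_N : ℝ³ → ℝ be affine maps such that ∂T ⊆ ⋃_{i=1}^N l_i⁻¹(0) and such that there exists M ∈ T with l_i(M) ≠ 0 for all i. Let k ≥ 1 and r ≥ 2N + k − 1 be integers. Then there exists a constant C > 0, depending only on T, the l_i, k and r, such that: for every polynomial vector field v₀ of degree at most k on ℝ³, every g ∈ L²(∂T, μH²; ℝ³), and every polynomial vector field W of degree at most r satisfying ∫_T W·q dx = ∫_T (∇×v₀)·q dx − ∫_{∂T} g·q dμH² for all polynomial vector fields q of degree at most r, one has ‖∇×v₀‖_{L²(T)} ≤ C ‖W‖_{L²(T)}. -/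
open MeasureTheory RealInnerProductSpace

/-- Euclidean 3-space. -/
abbrev E3 := EuclideanSpace ℝ (Fin 3)

/-- `f` is a polynomial function of total degree at most `k` on `ℝ³`. -/
def IsPolyFun3 (k : ℕ) (f : E3 → ℝ) : Prop :=
  ∃ P : MvPolynomial (Fin 3) ℝ, P.totalDegree ≤ k ∧
    ∀ x : E3, f x = MvPolynomial.eval (fun i => x i) P

/-- `F` is a polynomial vector field of degree at most `k` on `ℝ³`. -/
def IsPolyVF (k : ℕ) (F : E3 → E3) : Prop :=
  ∀ i : Fin 3, IsPolyFun3 k (fun x => F x i)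

/-- The curl `∇×F = (∂₂F₃ − ∂₃F₂, ∂₃F₁ − ∂₁F₃, ∂₁F₂ − ∂₂F₁)` of a vector field on `ℝ³`. -/
noncomputable def curl3 (F : E3 → E3) (x : E3) : E3 :=
  (WithLp.equiv 2 (Fin 3 → ℝ)).symm
    ![fderiv ℝ (fun y => F y 2) x (EuclideanSpace.single 1 (1 : ℝ)) -
        fderiv ℝ (fun y => F y 1) x (EuclideanSpace.single 2 (1 : ℝ)),
      fderiv ℝ (fun y => F y 0) x (EuclideanSpace.single 2 (1 : ℝ)) -
        fderiv ℝ (fun y => F y 2) x (EuclideanSpace.single 0 (1 : ℝ)),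
      fderiv ℝ (fun y => F y 1) x (EuclideanSpace.single 0 (1 : ℝ)) -
        fderiv ℝ (fun y => F y 0) x (EuclideanSpace.single 1 (1 : ℝ))]


/-! ### Auxiliary material -/

set_option maxHeartbeats 2000000
set_option synthInstance.maxHeartbeats 1000000

open MvPolynomial

noncomputable section

/-- Evaluation of a polynomial as a function on `E3`. -/
def evalFun (P : MvPolynomial (Fin 3) ℝ) : E3 → ℝ := fun x => eval (fun i => x i) P

lemma continuous_evalFun (P : MvPolynomial (Fin 3) ℝ) : Continuous (evalFun P) :=
  (MvPolynomial.continuous_eval P).comp (PiLp.continuous_ofLp 2 (fun _ : Fin 3 => ℝ))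

/-- The candidate derivative of `evalFun P` at `x`. -/
def polyDeriv (P : MvPolynomial (Fin 3) ℝ) (x : E3) : E3 →L[ℝ] ℝ :=
  ∑ j : Fin 3, evalFun (pderiv j P) x • (EuclideanSpace.proj (𝕜 := ℝ) j)

lemma polyDeriv_apply (P : MvPolynomial (Fin 3) ℝ) (x v : E3) :
    polyDeriv P x v = ∑ j : Fin 3, evalFun (pderiv j P) x * v j := by
  simp [polyDeriv, ContinuousLinearMap.sum_apply]

lemma hasFDerivAt_evalFun (P : MvPolynomial (Fin 3) ℝ) (x : E3) :
    HasFDerivAt (evalFun P) (polyDeriv P x) x := by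
  induction P using MvPolynomial.induction_on with
  | C a =>
    have h1 : evalFun (C a : MvPolynomial (Fin 3) ℝ) = fun _ : E3 => a := by
      funext y; simp [evalFun]
    have h2 : polyDeriv (C a : MvPolynomial (Fin 3) ℝ) x = 0 := by
      ext v; simp [polyDeriv_apply, evalFun]
    rw [h1, h2]; exact hasFDerivAt_const a x
  | add p q hp hq =>
    have h1 : evalFun (p + q) = fun y => evalFun p y + evalFun q y := by
      funext y; simp [evalFun]
    have h2 : polyDeriv (p + q) x = polyDeriv p x + polyDeriv q x := by
      ext v; simp [polyDeriv_apply, add_mul, Finset.sum_add_distrib, evalFun]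
    rw [h1, h2]; exact hp.add hq
  | mul_X p i hp =>
    have hXi : HasFDerivAt (fun y : E3 => y i) (EuclideanSpace.proj (𝕜 := ℝ) i) x :=
      (EuclideanSpace.proj (𝕜 := ℝ) i).hasFDerivAt
    have h1 : evalFun (p * X i) = fun y => evalFun p y * y i := by
      funext y; simp [evalFun]
    have h2 : polyDeriv (p * X i) x =
        evalFun p x • (EuclideanSpace.proj (𝕜 := ℝ) i) + x i • polyDeriv p x := by
      ext v
      simp only [polyDeriv_apply, ContinuousLinearMap.add_apply,
        ContinuousLinearMap.smul_apply, smul_eq_mul,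
        Finset.mul_sum]
      have : ∀ j : Fin 3, evalFun (pderiv j (p * X i)) x * v j =
          (evalFun (pderiv j p) x * x i) * v j
            + (if j = i then evalFun p x * v j else 0) := by
        intro j
        rcases eq_or_ne j i with rfl | hji
        · simp [pderiv_mul, pderiv_X_self, evalFun]
          ring
        · simp [pderiv_mul, pderiv_X_of_ne (Ne.symm hji), hji, evalFun, mul_comm]
      rw [Finset.sum_congr rfl fun j _ => this j, Finset.sum_add_distrib]
      rw [Finset.sum_ite_eq' Finset.univ i (fun j => evalFun p x * v j)]
      simp only [Finset.mem_univ, if_true, PiLp.proj_apply]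
      rw [add_comm]
      congr 1
      exact Finset.sum_congr rfl fun j _ => by ring
    rw [h1, h2]
    exact hp.mul hXi

lemma fderiv_evalFun_single (P : MvPolynomial (Fin 3) ℝ) (x : E3) (j : Fin 3) :
    fderiv ℝ (evalFun P) x (EuclideanSpace.single j (1 : ℝ)) = evalFun (pderiv j P) x := by
  rw [(hasFDerivAt_evalFun P x).fderiv, polyDeriv_apply]
  rw [Finset.sum_eq_single j]
  · simp [EuclideanSpace.single_apply]
  · intro b _ hb; simp [EuclideanSpace.single_apply, hb, Ne.symm hb]
  · simp

lemma totalDegree_pderiv_le (P : MvPolynomial (Fin 3) ℝ) (i : Fin 3) :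
    (pderiv i P).totalDegree ≤ P.totalDegree - 1 := by
  conv_lhs => rw [P.as_sum]
  rw [map_sum]
  refine (totalDegree_finset_sum _ _).trans (Finset.sup_le fun m hm => ?_)
  rw [pderiv_monomial]
  rcases Nat.eq_zero_or_pos (m i) with h0 | hpos
  · simp [h0]
  · refine (totalDegree_monomial_le _ _).trans ?_
    have hle : Finsupp.single i 1 ≤ m := by
      rw [Finsupp.single_le_iff]; exact hpos
    have hsum : ((m - Finsupp.single i 1).sum fun _ e => e) + 1 = m.sum fun _ e => e := by
      have h := tsub_add_cancel_of_le hle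
      calc ((m - Finsupp.single i 1).sum fun _ e => e) + 1
          = ((m - Finsupp.single i 1).sum fun _ e => e) +
            ((Finsupp.single i 1).sum fun _ e => e) := by
            rw [Finsupp.sum_single_index]; rfl
        _ = ((m - Finsupp.single i 1) + Finsupp.single i 1).sum fun _ e => e := by
            rw [Finsupp.sum_add_index' (fun _ => rfl) (fun _ _ _ => rfl)]
        _ = m.sum fun _ e => e := by rw [h]
    have hm' : (m.sum fun _ e => e) ≤ P.totalDegree := le_totalDegree hm
    simp only [Function.id_def] at hsum ⊢
    omega

lemma curl3_poly {k : ℕ} {F : E3 → E3} (hF : IsPolyVF k F) :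
    ∃ Q : Fin 3 → MvPolynomial (Fin 3) ℝ, (∀ i, (Q i).totalDegree ≤ k - 1) ∧
      ∀ x i, curl3 F x i = evalFun (Q i) x := by
  choose P hPdeg hPev using hF
  have hfe : ∀ c : Fin 3, (fun y : E3 => F y c) = evalFun (P c) := fun c => funext (hPev c)
  have hd : ∀ (c j : Fin 3) (x : E3),
      fderiv ℝ (fun y => F y c) x (EuclideanSpace.single j (1 : ℝ))
        = evalFun (pderiv j (P c)) x := by
    intro c j x; rw [hfe c, fderiv_evalFun_single]
  refine ⟨![pderiv 1 (P 2) - pderiv 2 (P 1), pderiv 2 (P 0) - pderiv 0 (P 2),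
      pderiv 0 (P 1) - pderiv 1 (P 0)], ?_, ?_⟩
  · intro i
    fin_cases i <;>
      simpa using (totalDegree_sub _ _).trans
        (max_le ((totalDegree_pderiv_le _ _).trans (Nat.sub_le_sub_right (hPdeg _) 1))
          ((totalDegree_pderiv_le _ _).trans (Nat.sub_le_sub_right (hPdeg _) 1)))
  · intro x i
    fin_cases i <;>
      simp [curl3, WithLp.equiv_symm_apply, hd, evalFun, map_sub]

lemma integral_inner_le_sqrt {α : Type*} [MeasurableSpace α] (μ : Measure α)
    (f g : α → E3) (hf : MemLp f 2 μ) (hg : MemLp g 2 μ) :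
    ∫ x, ⟪f x, g x⟫ ∂μ ≤
      Real.sqrt (∫ x, ‖f x‖ ^ 2 ∂μ) * Real.sqrt (∫ x, ‖g x‖ ^ 2 ∂μ) := by
  set F := hf.toLp f
  set G := hg.toLp g
  have hFf := hf.coeFn_toLp
  have hGg := hg.coeFn_toLp
  have hinner : (⟪F, G⟫ : ℝ) = ∫ x, ⟪f x, g x⟫ ∂μ := by
    rw [L2.inner_def]
    refine integral_congr_ae ?_
    filter_upwards [hFf, hGg] with x hx hy
    rw [hx, hy]
  have hnF : ‖F‖ = Real.sqrt (∫ x, ‖f x‖ ^ 2 ∂μ) := by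
    rw [norm_eq_sqrt_real_inner, L2.inner_def]
    congr 1
    refine integral_congr_ae ?_
    filter_upwards [hFf] with x hx
    rw [hx, real_inner_self_eq_norm_sq]
  have hnG : ‖G‖ = Real.sqrt (∫ x, ‖g x‖ ^ 2 ∂μ) := by
    rw [norm_eq_sqrt_real_inner, L2.inner_def]
    congr 1
    refine integral_congr_ae ?_
    filter_upwards [hGg] with x hx
    rw [hx, real_inner_self_eq_norm_sq]
  calc ∫ x, ⟪f x, g x⟫ ∂μ = ⟪F, G⟫ := hinner.symm
    _ ≤ ‖F‖ * ‖G‖ := real_inner_le_norm F G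
    _ = _ := by rw [hnF, hnG]

lemma quad_dominate {d : ℕ} (q1 q2 : EuclideanSpace ℝ (Fin d) → ℝ)
    (K : Submodule ℝ (EuclideanSpace ℝ (Fin d)))
    (h1c : Continuous q1) (h2c : Continuous q2)
    (h1nn : ∀ a, 0 ≤ q1 a) (h2nn : ∀ a, 0 ≤ q2 a)
    (h1hom : ∀ (t : ℝ) a, q1 (t • a) = t ^ 2 * q1 a)
    (h2hom : ∀ (t : ℝ) a, q2 (t • a) = t ^ 2 * q2 a)
    (hker : ∀ a, q2 a = 0 → a ∈ K)
    (h1K : ∀ a, ∀ z ∈ K, q1 (a + z) = q1 a)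
    (h2K : ∀ a, ∀ z ∈ K, q2 (a + z) = q2 a) :
    ∃ C : ℝ, 0 < C ∧ ∀ a, q1 a ≤ C * q2 a := by
  have hq10 : q1 0 = 0 := by
    have := h1hom 0 0; simpa using this
  have hq1K : ∀ z ∈ K, q1 z = 0 := by
    intro z hz
    have := h1K 0 z hz; simpa [hq10] using this
  set S : Set (EuclideanSpace ℝ (Fin d)) := Metric.sphere 0 1 ∩ (Kᗮ : Set _) with hS
  have hScomp : IsCompact S :=
    (isCompact_sphere 0 1).inter_right (Kᗮ.closed_of_finiteDimensional)
  rcases S.eq_empty_or_nonempty with hSe | hSne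
  · have hKtop : ∀ a, a ∈ K := by
      intro a
      by_contra hmem
      have hKne : Kᗮ ≠ ⊥ := by
        intro hbot
        exact hmem (Submodule.orthogonal_eq_bot_iff.mp hbot ▸ Submodule.mem_top)
      obtain ⟨v, hv, hv0⟩ := Submodule.exists_mem_ne_zero_of_ne_bot hKne
      have hu : (‖v‖⁻¹ • v) ∈ S := by
        constructor
        · rw [mem_sphere_zero_iff_norm, norm_smul, norm_inv, norm_norm,
            inv_mul_cancel₀ (norm_ne_zero_iff.mpr hv0)]
        · exact Kᗮ.smul_mem _ hv
      rw [hSe] at hu; exact hu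
    refine ⟨1, one_pos, fun a => ?_⟩
    rw [hq1K a (hKtop a), one_mul]
    exact h2nn a
  · obtain ⟨u₀, hu₀S, hu₀min⟩ := hScomp.exists_isMinOn hSne (h2c.continuousOn)
    obtain ⟨u₁, hu₁S, hu₁max⟩ := hScomp.exists_isMaxOn hSne (h1c.continuousOn)
    set δ := q2 u₀ with hδ
    set A := q1 u₁ with hA
    have hδpos : 0 < δ := by
      rcases (h2nn u₀).lt_or_eq with h | h
      · exact h
      · exfalso
        have hu₀K : u₀ ∈ K := hker u₀ h.symm
        have hu₀O : u₀ ∈ Kᗮ := hu₀S.2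
        have : u₀ = 0 := by
          have := Submodule.inner_right_of_mem_orthogonal hu₀K hu₀O
          exact inner_self_eq_zero.mp this
        have : ‖u₀‖ = 1 := mem_sphere_zero_iff_norm.mp hu₀S.1
        simp_all
    have hAnn : 0 ≤ A := h1nn u₁
    refine ⟨A / δ + 1, by positivity, fun a => ?_⟩
    obtain ⟨y, hy, z, hz, hazy⟩ := K.exists_add_mem_mem_orthogonal a
    have hq1a : q1 a = q1 z := by rw [hazy, add_comm, h1K z y hy]
    have hq2a : q2 a = q2 z := by rw [hazy, add_comm, h2K z y hy]
    rcases eq_or_ne z 0 with rfl | hz0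
    · rw [hq1a, hq10]
      exact mul_nonneg (by positivity) (h2nn a)
    · set u := ‖z‖⁻¹ • z with hu
      have hnz : ‖z‖ ≠ 0 := norm_ne_zero_iff.mpr hz0
      have huS : u ∈ S := by
        constructor
        · rw [mem_sphere_zero_iff_norm, hu, norm_smul, norm_inv, norm_norm,
            inv_mul_cancel₀ hnz]
        · exact Kᗮ.smul_mem _ hz
      have hzu : z = ‖z‖ • u := by
        rw [hu, smul_smul, mul_inv_cancel₀ hnz, one_smul]
      have h1z : q1 z = ‖z‖ ^ 2 * q1 u := by nth_rewrite 1 [hzu]; rw [h1hom]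
      have h2z : q2 z = ‖z‖ ^ 2 * q2 u := by nth_rewrite 1 [hzu]; rw [h2hom]
      have hq1u : q1 u ≤ A := hu₁max huS
      have hq2u : δ ≤ q2 u := hu₀min huS
      have key : q1 z ≤ (A / δ) * q2 z := by
        rw [h1z, h2z]
        have hmid : q1 u ≤ (A / δ) * q2 u := by
          have hAd : 0 ≤ A / δ := div_nonneg hAnn hδpos.le
          have : A = (A / δ) * δ := by field_simp
          calc q1 u ≤ A := hq1u
            _ = (A / δ) * δ := this
            _ ≤ (A / δ) * q2 u := by nlinarith [hq2u]
        nlinarith [sq_nonneg ‖z‖, hmid]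
      rw [hq1a, hq2a]
      calc q1 z ≤ (A / δ) * q2 z := key
        _ ≤ (A / δ + 1) * q2 z := by
            have : 0 ≤ q2 z := h2nn z
            nlinarith

lemma null_affine (a : E3) (b : ℝ) (h : ∃ y : E3, ⟪a, y⟫ + b ≠ 0) :
    (volume : Measure E3) {x : E3 | ⟪a, x⟫ + b = 0} = 0 := by
  rcases eq_or_ne a 0 with rfl | ha
  · obtain ⟨y, hy⟩ := h
    have hb : b ≠ 0 := by simpa using hy
    have : {x : E3 | ⟪(0 : E3), x⟫ + b = 0} = ∅ := by
      ext x; simp [hb]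
    rw [this]; simp
  · set x₀ : E3 := (-b / ‖a‖ ^ 2) • a with hx₀
    have hax₀ : ⟪a, x₀⟫ = -b := by
      rw [hx₀, real_inner_smul_right, real_inner_self_eq_norm_sq]
      have hna : ‖a‖ ^ 2 ≠ 0 := pow_ne_zero 2 (norm_ne_zero_iff.mpr ha)
      field_simp
    set K : Submodule ℝ E3 := LinearMap.ker ((innerSL ℝ a : E3 →L[ℝ] ℝ) : E3 →ₗ[ℝ] ℝ) with hK
    have hKne : K ≠ ⊤ := by
      intro htop
      have : a ∈ K := htop ▸ Submodule.mem_top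
      rw [hK, LinearMap.mem_ker] at this
      have : ⟪a, a⟫ = (0 : ℝ) := this
      exact ha (inner_self_eq_zero.mp this)
    have hset : {x : E3 | ⟪a, x⟫ + b = 0} = (fun z => -x₀ + z) ⁻¹' (K : Set E3) := by
      ext z
      simp only [Set.mem_setOf_eq, Set.mem_preimage, SetLike.mem_coe, hK,
        LinearMap.mem_ker]
      have : ((innerSL ℝ a : E3 →L[ℝ] ℝ) : E3 →ₗ[ℝ] ℝ) (-x₀ + z) = ⟪a, -x₀ + z⟫ := rfl
      rw [this, inner_add_right, inner_neg_right, hax₀]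
      constructor <;> intro hh <;> linarith
    rw [hset, measure_preimage_add]
    exact Measure.addHaar_submodule volume K hKne

lemma continuous_E3 (F : E3 → E3) (h : ∀ i, Continuous fun x => F x i) : Continuous F := by
  have : F = fun x => (WithLp.equiv 2 (Fin 3 → ℝ)).symm (fun i => F x i) := by
    funext x
    exact ((WithLp.equiv 2 (Fin 3 → ℝ)).symm_apply_apply (F x)).symm
  rw [this]
  exact (PiLp.continuous_toLp 2 (fun _ : Fin 3 => ℝ)).comp (continuous_pi h)

/-- Evaluation of a triple of polynomials as a vector field. -/
def Evf (p : Fin 3 → MvPolynomial (Fin 3) ℝ) : E3 → E3 :=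
  fun x => (WithLp.equiv 2 (Fin 3 → ℝ)).symm fun i => evalFun (p i) x

lemma Evf_apply (p : Fin 3 → MvPolynomial (Fin 3) ℝ) (x : E3) (i : Fin 3) :
    Evf p x i = evalFun (p i) x := rfl

lemma Evf_add (p q : Fin 3 → MvPolynomial (Fin 3) ℝ) (x : E3) :
    Evf (p + q) x = Evf p x + Evf q x := by
  ext i
  simp [Evf_apply, evalFun, Pi.add_apply, PiLp.add_apply]

lemma Evf_smul (t : ℝ) (p : Fin 3 → MvPolynomial (Fin 3) ℝ) (x : E3) :
    Evf (t • p) x = t • Evf p x := by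
  ext i
  simp [Evf_apply, evalFun, Pi.smul_apply, PiLp.smul_apply, MvPolynomial.smul_eval]

lemma Evf_zero (x : E3) : Evf 0 x = 0 := by
  ext i
  simp [Evf_apply, evalFun]

lemma Evf_sum {m : ℕ} (p : Fin m → Fin 3 → MvPolynomial (Fin 3) ℝ) (x : E3) :
    Evf (∑ j, p j) x = ∑ j, Evf (p j) x := by
  classical
  induction (Finset.univ : Finset (Fin m)) using Finset.induction_on with
  | empty => simp [Evf_zero]
  | insert j s hj ih => rw [Finset.sum_insert hj, Finset.sum_insert hj, Evf_add, ih]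

lemma continuous_Evf (p : Fin 3 → MvPolynomial (Fin 3) ℝ) : Continuous (Evf p) :=
  continuous_E3 _ (fun i => by simpa [Evf_apply] using continuous_evalFun (p i))

lemma quad_integral_eq {d : ℕ} {α : Type*} [MeasurableSpace α] (μ : Measure α)
    (w : α → ℝ) (b : Fin d → α → E3)
    (hint : ∀ j j' : Fin d, Integrable (fun x => w x * ⟪b j x, b j' x⟫) μ)
    (a : EuclideanSpace ℝ (Fin d)) :
    ∫ x, w x * ‖∑ j, a j • b j x‖ ^ 2 ∂μ =
      ∑ j, ∑ j', (a j * a j') * ∫ x, w x * ⟪b j x, b j' x⟫ ∂μ := by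
  have hpt : ∀ x, w x * ‖∑ j, a j • b j x‖ ^ 2
      = ∑ j, ∑ j', (a j * a j') * (w x * ⟪b j x, b j' x⟫) := by
    intro x
    rw [← real_inner_self_eq_norm_sq]
    rw [sum_inner, Finset.mul_sum]
    refine Finset.sum_congr rfl fun j _ => ?_
    rw [inner_sum, Finset.mul_sum]
    refine Finset.sum_congr rfl fun j' _ => ?_
    rw [real_inner_smul_left, real_inner_smul_right]
    ring
  calc ∫ x, w x * ‖∑ j, a j • b j x‖ ^ 2 ∂μ
      = ∫ x, ∑ j, ∑ j', (a j * a j') * (w x * ⟪b j x, b j' x⟫) ∂μ := by simp_rw [hpt]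
    _ = ∑ j, ∑ j', ∫ x, (a j * a j') * (w x * ⟪b j x, b j' x⟫) ∂μ := by
        rw [integral_finset_sum _
          (fun j _ => integrable_finset_sum _ (fun j' _ => (hint j j').const_mul _))]
        exact Finset.sum_congr rfl fun j _ =>
          integral_finset_sum _ (fun j' _ => (hint j j').const_mul _)
    _ = ∑ j, ∑ j', (a j * a j') * ∫ x, w x * ⟪b j x, b j' x⟫ ∂μ := by
        simp_rw [integral_const_mul]

/-- The submodule of coefficient vectors whose associated field vanishes a.e. -/
def aeKer {d : ℕ} (μ : Measure E3) (cf : EuclideanSpace ℝ (Fin d) → E3 → E3)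
    (hadd : ∀ a b x, cf (a + b) x = cf a x + cf b x)
    (hsmul : ∀ (t : ℝ) a x, cf (t • a) x = t • cf a x) :
    Submodule ℝ (EuclideanSpace ℝ (Fin d)) where
  carrier := {a | ∀ᵐ x ∂μ, cf a x = 0}
  add_mem' := by
    intro a b ha hb
    show ∀ᵐ x ∂μ, cf (a + b) x = 0
    filter_upwards [ha, hb] with x h1 h2
    rw [hadd, h1, h2, add_zero]
  zero_mem' := by
    show ∀ᵐ x ∂μ, cf 0 x = 0
    refine Filter.Eventually.of_forall fun x => ?_
    have := hsmul 0 0 x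
    simpa using this
  smul_mem' := by
    intro t a ha
    show ∀ᵐ x ∂μ, cf (t • a) x = 0
    filter_upwards [ha] with x h
    rw [hsmul, h, smul_zero]

lemma mem_aeKer {d : ℕ} {μ : Measure E3} {cf : EuclideanSpace ℝ (Fin d) → E3 → E3}
    {hadd} {hsmul} {a : EuclideanSpace ℝ (Fin d)} :
    a ∈ aeKer μ cf hadd hsmul ↔ ∀ᵐ x ∂μ, cf a x = 0 := Iff.rfl

/-- The space of polynomial vector fields of degree at most `m`, as coefficient data. -/
abbrev PVspace (m : ℕ) := Fin 3 → (MvPolynomial.restrictTotalDegree (Fin 3) ℝ m)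

abbrev pdim (m : ℕ) : ℕ := Module.finrank ℝ (PVspace m)

def pbasis (m : ℕ) : Module.Basis (Fin (pdim m)) ℝ (PVspace m) := Module.finBasis ℝ _

def peL (m : ℕ) : PVspace m ≃ₗ[ℝ] EuclideanSpace ℝ (Fin (pdim m)) :=
  (pbasis m).equivFun.trans (WithLp.linearEquiv 2 ℝ (Fin (pdim m) → ℝ)).symm

def ιp {m : ℕ} (p : PVspace m) : Fin 3 → MvPolynomial (Fin 3) ℝ := fun i => (p i : _)

def cfm (m : ℕ) (a : EuclideanSpace ℝ (Fin (pdim m))) : E3 → E3 :=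
  Evf (ιp ((peL m).symm a))

lemma cfm_add (m : ℕ) (a b : EuclideanSpace ℝ (Fin (pdim m))) (x : E3) :
    cfm m (a + b) x = cfm m a x + cfm m b x := by
  unfold cfm
  rw [map_add]
  rw [show ιp ((peL m).symm a + (peL m).symm b) = ιp ((peL m).symm a) + ιp ((peL m).symm b)
    from funext fun i => rfl]
  exact Evf_add _ _ x

lemma cfm_smul (m : ℕ) (t : ℝ) (a : EuclideanSpace ℝ (Fin (pdim m))) (x : E3) :
    cfm m (t • a) x = t • cfm m a x := by
  unfold cfm
  rw [_root_.map_smul]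
  rw [show ιp (t • (peL m).symm a) = t • ιp ((peL m).symm a) from funext fun i => rfl]
  exact Evf_smul t _ x

lemma cfm_sum_basis (m : ℕ) (a : EuclideanSpace ℝ (Fin (pdim m))) (x : E3) :
    cfm m a x = ∑ j, a j • Evf (ιp (pbasis m j)) x := by
  have h1 : (peL m).symm a = ∑ j, a j • pbasis m j := by
    have h0 : (peL m).symm a = (pbasis m).equivFun.symm ((WithLp.linearEquiv 2 ℝ _) a) := rfl
    rw [h0, Module.Basis.equivFun_symm_apply]
    rfl
  have h2 : ιp ((peL m).symm a) = ∑ j, a j • ιp (pbasis m j) := by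
    funext i
    rw [h1]
    simp only [ιp, Finset.sum_apply, Pi.smul_apply, AddSubmonoidClass.coe_finset_sum,
      SetLike.val_smul]
  rw [cfm, h2, Evf_sum]
  exact Finset.sum_congr rfl fun j _ => Evf_smul _ _ x

lemma continuous_cfm (m : ℕ) (a : EuclideanSpace ℝ (Fin (pdim m))) :
    Continuous (cfm m a) := continuous_Evf _

end

/-- Lemma 5.1 of the paper: on a (possibly non-convex) polyhedral element `T` whose boundary
lies in the union of the zero sets of the affine maps `l i`, the `L²(T)` norm of `∇×v₀` is
controlled by that of the discrete weak curl `W` of order `r ≥ 2N + k − 1`. -/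
theorem stmt9 (T : Set E3) (hTne : T.Nonempty) (hTo : IsOpen T)
    (hTb : Bornology.IsBounded T) (hfin : μH[2] (frontier T) < ⊤)
    (N : ℕ) (l : Fin N → E3 → ℝ)
    (hl : ∀ i, ∃ (a : E3) (b : ℝ), ∀ x, l i x = ⟪a, x⟫ + b)
    (hbd : frontier T ⊆ ⋃ i, (l i) ⁻¹' {0})
    (M : E3) (hM : M ∈ T) (hlM : ∀ i, l i M ≠ 0)
    (k r : ℕ) (hk : 1 ≤ k) (hr : 2 * N + k - 1 ≤ r) :
    ∃ C : ℝ, 0 < C ∧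
      ∀ v₀ : E3 → E3, IsPolyVF k v₀ →
      ∀ g : E3 → E3, MemLp g 2 ((μH[2]).restrict (frontier T)) →
      ∀ W : E3 → E3, IsPolyVF r W →
        (∀ q : E3 → E3, IsPolyVF r q →
          ∫ x in T, ⟪W x, q x⟫ =
            (∫ x in T, ⟪curl3 v₀ x, q x⟫) - ∫ x in frontier T, ⟪g x, q x⟫ ∂μH[2]) →
        Real.sqrt (∫ x in T, ‖curl3 v₀ x‖ ^ 2) ≤ C * Real.sqrt (∫ x in T, ‖W x‖ ^ 2) := by
  classical
  -- affine representations of the `l i`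
  choose al bl hlab using hl
  -- polynomial representation of `l i`
  set Pl : Fin N → MvPolynomial (Fin 3) ℝ :=
    fun i => (∑ t : Fin 3, MvPolynomial.C (al i t) * MvPolynomial.X t)
      + MvPolynomial.C (bl i) with hPldef
  have hPl_ev : ∀ i x, evalFun (Pl i) x = l i x := by
    intro i x
    rw [hlab]
    simp [evalFun, hPldef, PiLp.inner_apply, RCLike.inner_apply, map_sum, conj_trivial, mul_comm]
  have hPl_deg : ∀ i, (Pl i).totalDegree ≤ 1 := by
    intro i
    refine (MvPolynomial.totalDegree_add _ _).trans (max_le ?_ ?_)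
    · refine (MvPolynomial.totalDegree_finset_sum _ _).trans (Finset.sup_le fun t _ => ?_)
      refine (MvPolynomial.totalDegree_mul _ _).trans ?_
      simp [MvPolynomial.totalDegree_C, MvPolynomial.totalDegree_X]
    · simp [MvPolynomial.totalDegree_C]
  -- the bubble function
  set PΦ : MvPolynomial (Fin 3) ℝ := ∏ i : Fin N, (Pl i) ^ 2 with hPΦdef
  set Φ : E3 → ℝ := evalFun PΦ with hΦdef
  have hΦ_eq : ∀ x, Φ x = ∏ i : Fin N, (l i x) ^ 2 := by
    intro x
    rw [hΦdef, hPΦdef]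
    simp only [evalFun, map_prod, map_pow]
    exact Finset.prod_congr rfl fun i _ => by rw [← hPl_ev i x]; rfl
  have hΦ_deg : PΦ.totalDegree ≤ 2 * N := by
    refine (MvPolynomial.totalDegree_finset_prod _ _).trans ?_
    calc ∑ i : Fin N, ((Pl i) ^ 2).totalDegree ≤ ∑ _i : Fin N, 2 := by
          refine Finset.sum_le_sum fun i _ => ?_
          refine (MvPolynomial.totalDegree_pow _ _).trans ?_
          have := hPl_deg i
          omega
      _ = 2 * N := by simp [Finset.sum_const, mul_comm]
  have hΦc : Continuous Φ := continuous_evalFun PΦ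
  have hΦnn : ∀ x, 0 ≤ Φ x := fun x => by
    rw [hΦ_eq]; exact Finset.prod_nonneg fun i _ => sq_nonneg _
  have hΦ0 : ∀ x ∈ frontier T, Φ x = 0 := by
    intro x hx
    rw [hΦ_eq]
    obtain ⟨i, hi⟩ := Set.mem_iUnion.mp (hbd hx)
    refine Finset.prod_eq_zero (Finset.mem_univ i) ?_
    have : l i x = 0 := hi
    rw [this]; ring
  have hZnull : (volume : Measure E3) {x : E3 | Φ x = 0} = 0 := by
    refine measure_mono_null (fun x hx => ?_)
      (measure_iUnion_null fun i : Fin N =>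
        null_affine (al i) (bl i) ⟨M, by rw [← hlab]; exact hlM i⟩)
    rw [Set.mem_setOf_eq, hΦ_eq] at hx
    obtain ⟨i, -, hi⟩ := Finset.prod_eq_zero_iff.mp hx
    refine Set.mem_iUnion.mpr ⟨i, ?_⟩
    rw [Set.mem_setOf_eq, ← hlab]
    exact sq_eq_zero_iff.mp hi
  -- basic measure-theoretic facts about `T`
  have hT_meas : MeasurableSet T := hTo.measurableSet
  have hIntC : ∀ f : E3 → ℝ, Continuous f → IntegrableOn f T volume := fun f hf =>
    (hf.continuousOn.integrableOn_compact hTb.isCompact_closure).mono_set subset_closure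
  have hMem2 : ∀ F : E3 → E3, Continuous F → MemLp F 2 (volume.restrict T) := by
    intro F hF
    rw [memLp_two_iff_integrable_sq_norm hF.aestronglyMeasurable]
    exact hIntC _ ((hF.norm).pow 2)
  have hΦae : ∀ᵐ x ∂(volume.restrict T), Φ x ≠ 0 := by
    refine ae_restrict_of_ae ?_
    rw [ae_iff]
    simpa using hZnull
  -- the finite-dimensional coefficient space for curls
  set kc := k - 1 with hkc
  set K : Submodule ℝ (EuclideanSpace ℝ (Fin (pdim kc))) :=
    aeKer (volume.restrict T) (cfm kc) (cfm_add kc) (cfm_smul kc) with hKdef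
  set Q : (E3 → ℝ) → EuclideanSpace ℝ (Fin (pdim kc)) → ℝ :=
    fun w a => ∫ x in T, w x * ‖cfm kc a x‖ ^ 2 with hQdef
  have hQmain : ∀ w : E3 → ℝ, Continuous w → (∀ x, 0 ≤ w x) →
      (∀ᵐ x ∂(volume.restrict T), w x ≠ 0) →
      Continuous (Q w) ∧ (∀ a, 0 ≤ Q w a) ∧
      (∀ (t : ℝ) a, Q w (t • a) = t ^ 2 * Q w a) ∧
      (∀ a, ∀ z ∈ K, Q w (a + z) = Q w a) ∧
      (∀ a, Q w a = 0 → a ∈ K) := by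
    intro w hwc hwnn hwae
    have hint : ∀ a, IntegrableOn (fun x => w x * ‖cfm kc a x‖ ^ 2) T volume := fun a =>
      hIntC _ (hwc.mul (((continuous_cfm kc a).norm).pow 2))
    refine ⟨?_, ?_, ?_, ?_, ?_⟩
    · -- continuity
      have hb : ∀ j j' : Fin (pdim kc),
          Integrable (fun x => w x * ⟪Evf (ιp (pbasis kc j)) x, Evf (ιp (pbasis kc j')) x⟫)
            (volume.restrict T) := fun j j' =>
        hIntC _ (hwc.mul ((continuous_Evf _).inner (continuous_Evf _)))
      have hform : ∀ a, Q w a = ∑ j, ∑ j', (a j * a j') *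
          ∫ x in T, w x * ⟪Evf (ιp (pbasis kc j)) x, Evf (ιp (pbasis kc j')) x⟫ := by
        intro a
        have h1 : Q w a =
            ∫ x in T, w x * ‖∑ j, a j • Evf (ιp (pbasis kc j)) x‖ ^ 2 := by
          rw [hQdef]
          simp_rw [cfm_sum_basis]
        rw [h1, quad_integral_eq (volume.restrict T) w _ hb a]
      rw [show Q w = fun a => ∑ j, ∑ j', (a j * a j') *
          ∫ x in T, w x * ⟪Evf (ιp (pbasis kc j)) x, Evf (ιp (pbasis kc j')) x⟫
        from funext hform]
      refine continuous_finset_sum _ fun j _ => continuous_finset_sum _ fun j' _ => ?_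
      have hcoord : ∀ j'' : Fin (pdim kc),
          Continuous fun a : EuclideanSpace ℝ (Fin (pdim kc)) => a j'' := fun j'' =>
        (continuous_apply j'').comp (PiLp.continuous_ofLp 2 (fun _ : Fin (pdim kc) => ℝ))
      exact ((hcoord j).mul (hcoord j')).mul continuous_const
    · -- nonnegativity
      intro a
      exact setIntegral_nonneg hT_meas fun x _ => mul_nonneg (hwnn x) (by positivity)
    · -- homogeneity
      intro t a
      have hpt : ∀ x, w x * ‖cfm kc (t • a) x‖ ^ 2 = t ^ 2 * (w x * ‖cfm kc a x‖ ^ 2) := by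
        intro x
        rw [cfm_smul, norm_smul, Real.norm_eq_abs, mul_pow, sq_abs]
        ring
      rw [hQdef]
      simp_rw [hpt]
      rw [integral_const_mul]
    · -- invariance under the kernel
      intro a z hz
      rw [hQdef]
      refine integral_congr_ae ?_
      filter_upwards [mem_aeKer.mp hz] with x hx
      rw [cfm_add, hx, add_zero]
    · -- kernel characterisation
      intro a hQ0
      have h0 : (fun x => w x * ‖cfm kc a x‖ ^ 2) =ᵐ[volume.restrict T] 0 := by
        refine (integral_eq_zero_iff_of_nonneg ?_ (hint a)).mp hQ0
        intro x
        exact mul_nonneg (hwnn x) (by positivity)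
      rw [hKdef, mem_aeKer]
      filter_upwards [h0, hwae] with x h1 h2
      have h1' : w x * ‖cfm kc a x‖ ^ 2 = 0 := h1
      have : ‖cfm kc a x‖ ^ 2 = 0 := (mul_eq_zero.mp h1').resolve_left h2
      exact norm_eq_zero.mp (sq_eq_zero_iff.mp this)
  obtain ⟨hc1, hnn1, hhom1, hinv1, hker1⟩ :=
    hQmain (fun _ => 1) continuous_const (fun _ => zero_le_one)
      (Filter.Eventually.of_forall fun _ => one_ne_zero)
  obtain ⟨hcΦ, hnnΦ, hhomΦ, hinvΦ, hkerΦ⟩ := hQmain Φ hΦc hΦnn hΦae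
  obtain ⟨hcΦ2, hnnΦ2, hhomΦ2, hinvΦ2, hkerΦ2⟩ :=
    hQmain (fun x => Φ x ^ 2) (hΦc.pow 2) (fun x => sq_nonneg _)
      (by filter_upwards [hΦae] with x hx; exact pow_ne_zero 2 hx)
  obtain ⟨A, hApos, hA⟩ := quad_dominate (Q fun _ => 1) (Q Φ) K hc1 hcΦ hnn1 hnnΦ
    hhom1 hhomΦ hkerΦ hinv1 hinvΦ
  obtain ⟨B, hBpos, hB⟩ := quad_dominate (Q fun x => Φ x ^ 2) (Q fun _ => 1) K hcΦ2 hc1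
    hnnΦ2 hnn1 hhomΦ2 hhom1 hker1 hinvΦ2 hinv1
  refine ⟨A * Real.sqrt B + 1, by positivity, ?_⟩
  intro v₀ hv₀ g hg W hW hWeq
  -- coefficient vector of the curl
  obtain ⟨Qp, hQdeg, hQev⟩ := curl3_poly hv₀
  set p : PVspace kc := fun i =>
    ⟨Qp i, (MvPolynomial.mem_restrictTotalDegree _ _ _).mpr (hQdeg i)⟩ with hpdef
  set a := peL kc p with hadef
  have hcfa : ∀ x, cfm kc a x = curl3 v₀ x := by
    intro x
    have hsp : (peL kc).symm a = p := by rw [hadef, LinearEquiv.symm_apply_apply]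
    ext i
    rw [cfm, hsp, Evf_apply]
    exact (hQev x i).symm
  have hccont : Continuous (curl3 v₀) := by
    rw [show curl3 v₀ = cfm kc a from funext fun x => (hcfa x).symm]
    exact continuous_cfm kc a
  set q : E3 → E3 := fun x => Φ x • curl3 v₀ x with hqdef
  have hqcont : Continuous q := hΦc.smul hccont
  have hWcont : Continuous W := by
    refine continuous_E3 W fun i => ?_
    obtain ⟨P, -, hP⟩ := hW i
    rw [show (fun x => W x i) = evalFun P from funext hP]
    exact continuous_evalFun P
  have hq_poly : IsPolyVF r q := by
    intro i
    refine ⟨PΦ * Qp i, ?_, ?_⟩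
    · refine (MvPolynomial.totalDegree_mul _ _).trans ?_
      have h1 := hΦ_deg
      have h2 := hQdeg i
      omega
    · intro x
      show (Φ x • curl3 v₀ x) i = _
      have h1 : (Φ x • curl3 v₀ x) i = Φ x * curl3 v₀ x i := rfl
      rw [h1, hQev x i, map_mul]
      rfl
  have hbder : ∫ x in frontier T, ⟪g x, q x⟫ ∂μH[2] = 0 := by
    have hz : ∀ x ∈ frontier T, ⟪g x, q x⟫ = (0 : ℝ) := by
      intro x hx
      have : q x = 0 := by rw [hqdef]; simp [hΦ0 x hx]
      rw [this, inner_zero_right]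
    calc ∫ x in frontier T, ⟪g x, q x⟫ ∂μH[2]
        = ∫ _x in frontier T, (0 : ℝ) ∂μH[2] :=
          setIntegral_congr_fun isClosed_frontier.measurableSet hz
      _ = 0 := by simp
  have hWq : ∫ x in T, ⟪W x, q x⟫ = ∫ x in T, ⟪curl3 v₀ x, q x⟫ := by
    have := hWeq q hq_poly
    rw [hbder, sub_zero] at this
    exact this
  have hQΦ_eq : Q Φ a = ∫ x in T, ⟪curl3 v₀ x, q x⟫ := by
    rw [hQdef]
    have hpt : ∀ x, Φ x * ‖cfm kc a x‖ ^ 2 = ⟪curl3 v₀ x, q x⟫ := by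
      intro x
      rw [hcfa, hqdef, real_inner_smul_right, real_inner_self_eq_norm_sq]
    simp_rw [hpt]
  have hqsq : ∫ x in T, ‖q x‖ ^ 2 = Q (fun x => Φ x ^ 2) a := by
    rw [hQdef]
    have hpt : ∀ x, Φ x ^ 2 * ‖cfm kc a x‖ ^ 2 = ‖q x‖ ^ 2 := by
      intro x
      rw [hcfa, hqdef, norm_smul, Real.norm_eq_abs, mul_pow, sq_abs]
    simp_rw [hpt]
  have hXeq : ∫ x in T, ‖curl3 v₀ x‖ ^ 2 = Q (fun _ => 1) a := by
    rw [hQdef]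
    have hpt : ∀ x, (1 : ℝ) * ‖cfm kc a x‖ ^ 2 = ‖curl3 v₀ x‖ ^ 2 := by
      intro x; rw [hcfa, one_mul]
    simp_rw [hpt]
  have hCS : ∫ x in T, ⟪W x, q x⟫ ≤
      Real.sqrt (∫ x in T, ‖W x‖ ^ 2) * Real.sqrt (∫ x in T, ‖q x‖ ^ 2) :=
    integral_inner_le_sqrt (volume.restrict T) W q (hMem2 W hWcont) (hMem2 q hqcont)
  set X := Real.sqrt (∫ x in T, ‖curl3 v₀ x‖ ^ 2) with hX
  set Y := Real.sqrt (∫ x in T, ‖W x‖ ^ 2) with hY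
  have hXnn : 0 ≤ X := Real.sqrt_nonneg _
  have hYnn : 0 ≤ Y := Real.sqrt_nonneg _
  have hX2 : X ^ 2 = Q (fun _ => 1) a := by
    rw [hX, Real.sq_sqrt (by rw [hXeq]; exact hnn1 a), hXeq]
  have hXQ : Real.sqrt (Q (fun _ => 1) a) = X := by
    rw [← hX2, Real.sqrt_sq hXnn]
  have hsqB : Real.sqrt (∫ x in T, ‖q x‖ ^ 2) ≤ Real.sqrt B * X := by
    rw [hqsq]
    refine (Real.sqrt_le_sqrt (hB a)).trans ?_
    rw [Real.sqrt_mul hBpos.le, hXQ]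
  have key : X ^ 2 ≤ A * (Y * (Real.sqrt B * X)) := by
    calc X ^ 2 = Q (fun _ => 1) a := hX2
      _ ≤ A * Q Φ a := hA a
      _ = A * ∫ x in T, ⟪W x, q x⟫ := by rw [hQΦ_eq, hWq]
      _ ≤ A * (Y * Real.sqrt (∫ x in T, ‖q x‖ ^ 2)) := by
          refine mul_le_mul_of_nonneg_left ?_ hApos.le
          rw [hY]
          exact hCS
      _ ≤ A * (Y * (Real.sqrt B * X)) := by
          refine mul_le_mul_of_nonneg_left (mul_le_mul_of_nonneg_left hsqB hYnn) hApos.le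
  rcases hXnn.eq_or_lt with hX0 | hXpos
  · rw [← hX0]
    positivity
  · nlinarith [key, mul_pos hXpos hXpos, mul_nonneg hYnn hXpos.le,
      mul_nonneg (mul_nonneg hApos.le (Real.sqrt_nonneg B)) hYnn]
end

section
/- (Upper bound for the discrete weak curl on a single element.) Let T ⊂ ℝ³ be a nonempty bounded open set with μH²(∂T) < ∞, and let k, r ∈ ℕ. Then there exists a constant C > 0, depending only on T, k and r, such that: for every polynomial vector field v₀ of degree at most k on ℝ³, every g ∈ L²(∂T, μH²; ℝ³), and every polynomial vector field W of degree at most r satisfying ∫_T W·q dx = ∫_T (∇×v₀)·q dx − ∫_{∂T} g·q dμH² for all polynomial vector fields q of degree at most r, one has ‖W‖_{L²(T)} ≤ C ( ‖∇×v₀‖_{L²(T)} + ‖g‖_{L²(∂T, μH²)} ). -/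
set_option maxHeartbeats 1000000


open MeasureTheory RealInnerProductSpace

lemma exists_trace_const {ι : Type} [Fintype ι] {E F : Type*} [NormedAddCommGroup E]
    [NormedSpace ℝ E] [NormedAddCommGroup F] [NormedSpace ℝ F]
    (A : (ι → ℝ) →ₗ[ℝ] E) (B : (ι → ℝ) →ₗ[ℝ] F) (hinj : Function.Injective A) :
    ∃ C0 : ℝ, 0 ≤ C0 ∧ ∀ c, ‖B c‖ ≤ C0 * ‖A c‖ := by
  let e := LinearEquiv.ofInjective A hinj
  haveI : FiniteDimensional ℝ (LinearMap.range A) :=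
    FiniteDimensional.of_surjective (e : (ι → ℝ) →ₗ[ℝ] LinearMap.range A) e.surjective
  let L := LinearMap.toContinuousLinearMap
    (B ∘ₗ (e.symm : LinearMap.range A →ₗ[ℝ] (ι → ℝ)))
  refine ⟨‖L‖, ContinuousLinearMap.opNorm_nonneg _, fun c => ?_⟩
  have h1 : B c = L (e c) := by
    have h2 : L (e c) = (B ∘ₗ (e.symm : LinearMap.range A →ₗ[ℝ] (ι → ℝ))) (e c) := by
      rw [LinearMap.coe_toContinuousLinearMap']
    rw [h2, LinearMap.comp_apply]
    congr 1
    exact (LinearEquiv.symm_apply_apply e c).symm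
  have h4 : ((e c : LinearMap.range A) : E) = A c := LinearEquiv.ofInjective_apply A c
  have h3 : ‖(e c : LinearMap.range A)‖ = ‖A c‖ := by
    calc ‖(e c : LinearMap.range A)‖ = ‖((e c : LinearMap.range A) : E)‖ :=
          (Submodule.norm_coe _).symm
      _ = ‖A c‖ := by rw [h4]
  calc ‖B c‖ = ‖L (e c)‖ := by rw [h1]
    _ ≤ ‖L‖ * ‖e c‖ := L.le_opNorm _
    _ = ‖L‖ * ‖A c‖ := by rw [h3]

lemma sqrt_bound_arith {x a b y C0 : ℝ} (hx : 0 ≤ x) (ha : 0 ≤ a) (hb : 0 ≤ b)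
    (hC0 : 0 ≤ C0) (h1 : x ^ 2 ≤ a * x + b * y) (h2 : y ≤ C0 * x) :
    x ≤ max 1 C0 * (a + b) := by
  have hmax1 : (1:ℝ) ≤ max 1 C0 := le_max_left _ _
  have hmax2 : C0 ≤ max 1 C0 := le_max_right _ _
  rcases eq_or_lt_of_le hx with h0 | h0
  · rw [← h0]
    positivity
  · have hy : b * y ≤ b * (C0 * x) := mul_le_mul_of_nonneg_left h2 hb
    have hstep : x ≤ a + b * C0 := by nlinarith
    calc x ≤ a + b * C0 := hstep
      _ ≤ max 1 C0 * a + max 1 C0 * b := by nlinarith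
      _ = max 1 C0 * (a + b) := by ring


namespace Stmt10Aux

variable (r : ℕ)

abbrev Idx (r : ℕ) := Fin 3 → Fin (r + 1)

/-- exponent function to finsupp -/
noncomputable def toD (m : Idx r) : Fin 3 →₀ ℕ := Finsupp.equivFunOnFinite.symm (fun j => (m j : ℕ))

@[simp] lemma toD_apply (m : Idx r) (j : Fin 3) : toD r m j = m j := rfl

lemma toD_inj : Function.Injective (toD r) := by
  intro m m' h
  funext j
  have := congrArg (fun d => d j) h
  simpa [toD_apply] using Fin.ext this

/-- the scalar polynomial with coefficients `a` -/
noncomputable def poly1 (a : Idx r → ℝ) : MvPolynomial (Fin 3) ℝ :=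
  ∑ m : Idx r, MvPolynomial.monomial (toD r m) (a m)

lemma eval_monomial_eq (d : Fin 3 →₀ ℕ) (a : ℝ) (y : Fin 3 → ℝ) :
    MvPolynomial.eval y (MvPolynomial.monomial d a) = a * ∏ j, y j ^ d j := by
  rw [MvPolynomial.eval_monomial]
  congr 1
  exact Finsupp.prod_fintype _ _ (by simp)

lemma eval_poly1 (a : Idx r → ℝ) (y : Fin 3 → ℝ) :
    MvPolynomial.eval y (poly1 r a) = ∑ m : Idx r, a m * ∏ j, y j ^ (m j : ℕ) := by
  simp only [poly1, map_sum, eval_monomial_eq, toD_apply]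

lemma coeff_poly1 (a : Idx r → ℝ) (m₀ : Idx r) :
    (poly1 r a).coeff (toD r m₀) = a m₀ := by
  rw [poly1, MvPolynomial.coeff_sum]
  rw [Finset.sum_eq_single m₀]
  · simp [MvPolynomial.coeff_monomial]
  · intro m _ hm
    rw [MvPolynomial.coeff_monomial, if_neg (fun h => hm (toD_inj r h))]
  · simp

/-- representation of a low-degree polynomial -/
lemma repr_poly (P : MvPolynomial (Fin 3) ℝ) (hP : P.totalDegree ≤ r) :
    P = poly1 r (fun m => P.coeff (toD r m)) := by
  apply MvPolynomial.ext
  intro d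
  rw [poly1, MvPolynomial.coeff_sum]
  by_cases hd : ∀ j, d j ≤ r
  · set m₀ : Idx r := fun j => ⟨d j, Nat.lt_succ_of_le (hd j)⟩ with hm₀
    have hdm : toD r m₀ = d := by ext j; simp [toD_apply, hm₀]
    rw [Finset.sum_eq_single m₀]
    · simp [MvPolynomial.coeff_monomial, hdm]
    · intro m _ hm
      rw [MvPolynomial.coeff_monomial, if_neg]
      intro h; exact hm (toD_inj r (h.trans hdm.symm))
    · simp
  · push_neg at hd
    obtain ⟨j, hj⟩ := hd
    have hcoeff : P.coeff d = 0 := by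
      apply MvPolynomial.coeff_eq_zero_of_totalDegree_lt
      calc P.totalDegree ≤ r := hP
        _ < d j := hj
        _ ≤ ∑ i ∈ d.support, d i := by
            apply Finset.single_le_sum (fun i _ => Nat.zero_le _)
            rw [Finsupp.mem_support_iff]; omega
    rw [hcoeff, Finset.sum_eq_zero]
    intro m _
    rw [MvPolynomial.coeff_monomial, if_neg]
    intro h
    have := congrArg (fun e => e j) h
    simp only [toD_apply] at this
    omega

/-- evaluation of the vector field with coefficients `c` -/
noncomputable def evP (c : Fin 3 × Idx r → ℝ) : E3 → E3 := fun x =>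
  (WithLp.equiv 2 (Fin 3 → ℝ)).symm
    (fun i => ∑ m : Idx r, c (i, m) * ∏ j, x j ^ (m j : ℕ))

lemma evP_apply (c : Fin 3 × Idx r → ℝ) (x : E3) (i : Fin 3) :
    evP r c x i = ∑ m : Idx r, c (i, m) * ∏ j, x j ^ (m j : ℕ) := rfl

lemma evP_eq_eval (c : Fin 3 × Idx r → ℝ) (x : E3) (i : Fin 3) :
    evP r c x i = MvPolynomial.eval (fun j => x j) (poly1 r (fun m => c (i, m))) := by
  rw [evP_apply, eval_poly1]

lemma evP_add (c c' : Fin 3 × Idx r → ℝ) : evP r (c + c') = evP r c + evP r c' := by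
  funext x
  apply PiLp.ext
  intro i
  simp only [Pi.add_apply, PiLp.add_apply, evP_apply, Pi.add_apply, add_mul,
    Finset.sum_add_distrib]

lemma evP_smul (t : ℝ) (c : Fin 3 × Idx r → ℝ) : evP r (t • c) = t • evP r c := by
  funext x
  apply PiLp.ext
  intro i
  simp only [Pi.smul_apply, PiLp.smul_apply, evP_apply, smul_eq_mul, Finset.mul_sum, mul_assoc]

lemma evP_zero_of (c : Fin 3 × Idx r → ℝ) (h : ∀ x : E3, evP r c x = 0) : c = 0 := by
  funext p
  obtain ⟨i, m⟩ := p
  have hpoly : poly1 r (fun m => c (i, m)) = 0 := by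
    apply MvPolynomial.funext
    intro y
    have := congrArg (fun v : E3 => v i) (h ((WithLp.equiv 2 (Fin 3 → ℝ)).symm y))
    simp only [evP_eq_eval] at this
    simpa using this
  have := coeff_poly1 r (fun m => c (i, m)) m
  rw [hpoly] at this
  simpa using this.symm

lemma eval_repr (P : MvPolynomial (Fin 3) ℝ) (hP : P.totalDegree ≤ r) (y : Fin 3 → ℝ) :
    MvPolynomial.eval y P = ∑ m : Idx r, P.coeff (toD r m) * ∏ j, y j ^ (m j : ℕ) := by
  conv_lhs => rw [repr_poly r P hP]
  rw [eval_poly1]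

/-- any polynomial VF of degree ≤ r is an `evP` -/
lemma exists_coeffs {W : E3 → E3} (hW : IsPolyVF r W) :
    ∃ c : Fin 3 × Idx r → ℝ, W = evP r c := by
  have h : ∀ i : Fin 3, ∃ a : Idx r → ℝ, ∀ x : E3,
      W x i = ∑ m : Idx r, a m * ∏ j, x j ^ (m j : ℕ) := by
    intro i
    obtain ⟨P, hPd, hPe⟩ := hW i
    refine ⟨fun m => P.coeff (toD r m), fun x => ?_⟩
    have h1 : W x i = MvPolynomial.eval (fun j => x j) P := hPe x
    rw [h1, eval_repr r P hPd]
  choose a ha using h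
  refine ⟨fun p => a p.1 p.2, ?_⟩
  funext x
  apply PiLp.ext
  intro i
  rw [evP_apply]
  exact ha i x

lemma analytic_evP (c : Fin 3 × Idx r → ℝ) (i : Fin 3) :
    AnalyticOnNhd ℝ (fun x : E3 => evP r c x i) Set.univ := by
  have : AnalyticOnNhd ℝ (fun x : E3 => ∑ m : Idx r, c (i, m) * ∏ j, x j ^ (m j : ℕ))
      Set.univ := by
    apply Finset.analyticOnNhd_fun_sum
    intro m _
    apply AnalyticOnNhd.mul (analyticOnNhd_const)
    apply Finset.analyticOnNhd_fun_prod
    intro j _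
    exact fun x hx => ((fun x _ => ((EuclideanSpace.proj (𝕜 := ℝ) (i := j)) :
      E3 →L[ℝ] ℝ).analyticAt x) x hx).pow _
  simpa [evP_apply] using this

lemma continuous_evP (c : Fin 3 × Idx r → ℝ) : Continuous (evP r c) := by
  refine Continuous.comp (PiLp.continuous_toLp 2 (fun _ : Fin 3 => ℝ)) ?_
  refine continuous_pi fun i => ?_
  have hc : Continuous fun x : E3 => evP r c x i :=
    continuousOn_univ.mp ((analytic_evP r c i).continuousOn)
  simpa [evP_apply] using hc

/-- identity theorem: if `evP c` vanishes on a nonempty open set, it vanishes identically -/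
lemma coeffs_zero_of_vanish {T : Set E3} (hTo : IsOpen T) (hTne : T.Nonempty)
    (c : Fin 3 × Idx r → ℝ) (hvan : ∀ x ∈ T, evP r c x = 0) : c = 0 := by
  obtain ⟨z₀, hz₀⟩ := hTne
  apply evP_zero_of r
  intro x
  apply PiLp.ext
  intro i
  have hev : (fun x : E3 => evP r c x i) =ᶠ[nhds z₀] 0 := by
    filter_upwards [hTo.mem_nhds hz₀] with y hy
    rw [hvan y hy]
    rfl
  have h := (analytic_evP r c i).eqOn_zero_of_preconnected_of_eventuallyEq_zero
    isPreconnected_univ (Set.mem_univ z₀) hev (Set.mem_univ x)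
  simpa using h

lemma memLp2_of_continuous (f : E3 → E3) (hf : Continuous f) (μ : Measure E3)
    [IsFiniteMeasure μ] (s : Set E3) (hs : IsCompact s) (hae : ∀ᵐ x ∂μ, x ∈ s) :
    MemLp f 2 μ := by
  obtain ⟨C, hC⟩ := hs.exists_bound_of_continuousOn hf.continuousOn
  exact MemLp.of_bound hf.aestronglyMeasurable C (hae.mono fun x hx => hC x hx)

lemma analytic_polyfun {k : ℕ} {f : E3 → ℝ} (hf : IsPolyFun3 k f) :
    AnalyticOnNhd ℝ f Set.univ := by
  obtain ⟨P, _, hPe⟩ := hf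
  have : AnalyticOnNhd ℝ (fun x : E3 => MvPolynomial.eval
      ((PiLp.continuousLinearEquiv 2 ℝ (fun _ : Fin 3 => ℝ)).toContinuousLinearMap x) P)
      Set.univ :=
    AnalyticOnNhd.eval_continuousLinearMap _ P
  have he : f = fun x : E3 => MvPolynomial.eval
      ((PiLp.continuousLinearEquiv 2 ℝ (fun _ : Fin 3 => ℝ)).toContinuousLinearMap x) P := by
    funext x; exact hPe x
  rw [he]; exact this

lemma contDiff_polyfun {k : ℕ} {f : E3 → ℝ} (hf : IsPolyFun3 k f) :
    ContDiff ℝ 1 f := by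
  have h := analytic_polyfun hf
  have : ContDiffOn ℝ 1 f Set.univ := fun x hx => ((h x hx).contDiffAt).contDiffWithinAt
  exact contDiffOn_univ.mp this

lemma continuous_fderiv_apply {k : ℕ} {f : E3 → ℝ} (hf : IsPolyFun3 k f) (v : E3) :
    Continuous fun x => fderiv ℝ f x v :=
  ((contDiff_polyfun hf).continuous_fderiv one_ne_zero).clm_apply continuous_const

lemma continuous_curl3 {k : ℕ} {F : E3 → E3} (hF : IsPolyVF k F) :
    Continuous (curl3 F) := by
  unfold curl3
  refine Continuous.comp (PiLp.continuous_toLp 2 (fun _ : Fin 3 => ℝ)) ?_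
  refine continuous_pi fun i => ?_
  fin_cases i <;>
    simp only [Matrix.cons_val_zero, Matrix.cons_val_one, Matrix.head_cons,
      Matrix.cons_val_two, Matrix.tail_cons] <;>
    exact ((continuous_fderiv_apply (hF _) _).sub (continuous_fderiv_apply (hF _) _))

lemma inner_toLp {μ : Measure E3} {f g : E3 → E3} (hf : MemLp f 2 μ) (hg : MemLp g 2 μ) :
    ⟪hf.toLp f, hg.toLp g⟫ = ∫ x, ⟪f x, g x⟫ ∂μ := by
  rw [L2.inner_def]
  apply integral_congr_ae
  filter_upwards [hf.coeFn_toLp, hg.coeFn_toLp] with x h1 h2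
  rw [h1, h2]

lemma norm_toLp_eq {μ : Measure E3} {f : E3 → E3} (hf : MemLp f 2 μ) :
    ‖hf.toLp f‖ = Real.sqrt (∫ x, ‖f x‖ ^ 2 ∂μ) := by
  have h : (∫ x, ‖f x‖ ^ 2 ∂μ) = ‖hf.toLp f‖ ^ 2 := by
    rw [← real_inner_self_eq_norm_sq, inner_toLp hf hf]
    apply integral_congr_ae
    filter_upwards with x
    rw [real_inner_self_eq_norm_sq]
  rw [h, Real.sqrt_sq (norm_nonneg _)]

/-- the `toLp` linear map of `evP` -/
noncomputable def Φ (μ : Measure E3) (mem : ∀ c : Fin 3 × Idx r → ℝ, MemLp (evP r c) 2 μ) :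
    (Fin 3 × Idx r → ℝ) →ₗ[ℝ] Lp E3 2 μ where
  toFun c := (mem c).toLp _
  map_add' c c' := by
    rw [← MemLp.toLp_add (mem c) (mem c')]
    refine MemLp.toLp_congr _ _ ?_
    rw [evP_add]
  map_smul' t c := by
    rw [RingHom.id_apply, ← MemLp.toLp_const_smul t (mem c)]
    exact MemLp.toLp_congr (mem (t • c)) ((mem c).const_smul t) (by rw [evP_smul])

lemma Φ_apply (μ : Measure E3) (mem : ∀ c : Fin 3 × Idx r → ℝ, MemLp (evP r c) 2 μ)
    (c : Fin 3 × Idx r → ℝ) : Φ r μ mem c = (mem c).toLp _ := rfl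

end Stmt10Aux

open Stmt10Aux in
/-- Upper bound for the discrete weak curl on a single element: the `L²(T)` norm of the
discrete weak curl `W` of order `r` for the data `(v₀, g)` is bounded by a constant times
`‖∇×v₀‖_{L²(T)} + ‖g‖_{L²(∂T, μH²)}`. -/
theorem stmt10 (T : Set E3) (hTne : T.Nonempty) (hTo : IsOpen T)
    (hTb : Bornology.IsBounded T) (hfin : μH[2] (frontier T) < ⊤) (k r : ℕ) :
    ∃ C : ℝ, 0 < C ∧
      ∀ v₀ : E3 → E3, IsPolyVF k v₀ →
      ∀ g : E3 → E3, MemLp g 2 ((μH[2]).restrict (frontier T)) →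
      ∀ W : E3 → E3, IsPolyVF r W →
        (∀ q : E3 → E3, IsPolyVF r q →
          ∫ x in T, ⟪W x, q x⟫ =
            (∫ x in T, ⟪curl3 v₀ x, q x⟫) - ∫ x in frontier T, ⟪g x, q x⟫ ∂μH[2]) →
        Real.sqrt (∫ x in T, ‖W x‖ ^ 2) ≤
          C * (Real.sqrt (∫ x in T, ‖curl3 v₀ x‖ ^ 2) +
               Real.sqrt (∫ x in frontier T, ‖g x‖ ^ 2 ∂μH[2])) := by
  classical
  haveI hfinT : IsFiniteMeasure (volume.restrict T) := by
    constructor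
    rw [Measure.restrict_apply_univ]
    exact lt_of_le_of_lt (measure_mono subset_closure) hTb.isCompact_closure.measure_lt_top
  haveI hfinB : IsFiniteMeasure ((μH[2] : Measure E3).restrict (frontier T)) := by
    constructor
    rw [Measure.restrict_apply_univ]
    exact hfin
  have hclos : IsCompact (closure T) := hTb.isCompact_closure
  have hcompB : IsCompact (frontier T) := (hTb.closure.subset frontier_subset_closure).isCompact_closure.of_isClosed_subset isClosed_frontier subset_closure
  have memT : ∀ f : E3 → E3, Continuous f → MemLp f 2 (volume.restrict T) := fun f hf =>
    memLp2_of_continuous f hf _ _ hclos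
      ((ae_restrict_mem hTo.measurableSet).mono fun x hx => subset_closure hx)
  have memB : ∀ f : E3 → E3, Continuous f →
      MemLp f 2 ((μH[2] : Measure E3).restrict (frontier T)) := fun f hf =>
    memLp2_of_continuous f hf _ _ hcompB
      (ae_restrict_mem isClosed_frontier.measurableSet)
  -- the two linear maps
  have memT' : ∀ c : Fin 3 × Idx r → ℝ, MemLp (evP r c) 2 (volume.restrict T) :=
    fun c => memT _ (continuous_evP r c)
  have memB' : ∀ c : Fin 3 × Idx r → ℝ, MemLp (evP r c) 2
      ((μH[2] : Measure E3).restrict (frontier T)) :=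
    fun c => memB _ (continuous_evP r c)
  set ΦT := Φ r (volume.restrict T) memT' with hΦTdef
  set ΦB := Φ r ((μH[2] : Measure E3).restrict (frontier T)) memB' with hΦBdef
  -- injectivity of ΦT
  have hinj : Function.Injective ΦT := by
    rw [← LinearMap.ker_eq_bot, LinearMap.ker_eq_bot']
    intro c hc
    have hae : evP r c =ᵐ[volume.restrict T] 0 := by
      have h0 : (memT' c).toLp (evP r c) = MemLp.toLp 0 (MemLp.zero : MemLp (0 : E3 → E3) 2 (volume.restrict T)) := by
        have h1 : ΦT c = (memT' c).toLp (evP r c) := rfl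
        rw [← h1, hc, MemLp.toLp_zero]
      exact (MemLp.toLp_eq_toLp_iff _ _).mp h0
    have h2 : ∀ᵐ x ∂(volume : Measure E3), x ∈ T → evP r c x = 0 :=
      (ae_restrict_iff' hTo.measurableSet).mp hae
    rw [MeasureTheory.ae_iff] at h2
    have hset : {x : E3 | ¬(x ∈ T → evP r c x = 0)} = T ∩ (evP r c) ⁻¹' ({0}ᶜ) := by
      ext x
      simp only [Set.mem_setOf_eq, Set.mem_inter_iff, Set.mem_preimage, Set.mem_compl_iff,
        Set.mem_singleton_iff]
      tauto
    rw [hset] at h2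
    have hopen : IsOpen (T ∩ (evP r c) ⁻¹' ({0}ᶜ)) :=
      hTo.inter (isOpen_compl_singleton.preimage (continuous_evP r c))
    have hempty := (hopen.measure_eq_zero_iff volume).mp h2
    have hvan : ∀ x ∈ T, evP r c x = 0 := by
      intro x hx
      by_contra hne
      have : x ∈ T ∩ (evP r c) ⁻¹' ({0}ᶜ) := ⟨hx, hne⟩
      rw [hempty] at this
      exact this
    exact coeffs_zero_of_vanish r hTo hTne c hvan
  -- the trace constant
  obtain ⟨C0, hC0, htrace⟩ := exists_trace_const ΦT ΦB hinj
  refine ⟨max 1 C0, lt_of_lt_of_le one_pos (le_max_left _ _), ?_⟩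
  intro v₀ hv g hg W hW hweak
  obtain ⟨c, rfl⟩ := exists_coeffs r hW
  have hWT : MemLp (evP r c) 2 (volume.restrict T) := memT' c
  have hcurl : MemLp (curl3 v₀) 2 (volume.restrict T) := memT _ (continuous_curl3 hv)
  have hEq := hweak (evP r c) hW
  have hfT : ΦT c = hWT.toLp _ := rfl
  have hfB : ΦB c = (memB' c).toLp _ := rfl
  -- rewrite the weak identity in L² inner products
  have hinner : ⟪ΦT c, ΦT c⟫ = ⟪hcurl.toLp _, ΦT c⟫ - ⟪hg.toLp _, ΦB c⟫ := by
    rw [hfT, hfB, inner_toLp hWT hWT, inner_toLp hcurl hWT,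
      inner_toLp hg (memB' c)]
    exact hEq
  -- norms
  have hnormsq : ‖ΦT c‖ ^ 2 ≤ ‖hcurl.toLp _‖ * ‖ΦT c‖ + ‖hg.toLp _‖ * ‖ΦB c‖ := by
    rw [← real_inner_self_eq_norm_sq, hinner]
    have h1 : ⟪hcurl.toLp _, ΦT c⟫ ≤ ‖hcurl.toLp _‖ * ‖ΦT c‖ := real_inner_le_norm _ _
    have h2 : -⟪hg.toLp _, ΦB c⟫ ≤ ‖hg.toLp _‖ * ‖ΦB c‖ := by
      have := abs_real_inner_le_norm (hg.toLp _) (ΦB c)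
      have h3 := neg_abs_le (⟪hg.toLp _, ΦB c⟫)
      linarith
    linarith
  have hfinal : ‖ΦT c‖ ≤ max 1 C0 * (‖hcurl.toLp _‖ + ‖hg.toLp _‖) :=
    sqrt_bound_arith (norm_nonneg _) (norm_nonneg _) (norm_nonneg _) hC0 hnormsq (htrace c)
  calc Real.sqrt (∫ x in T, ‖evP r c x‖ ^ 2) = ‖ΦT c‖ := by rw [hfT, norm_toLp_eq hWT]
    _ ≤ max 1 C0 * (‖hcurl.toLp _‖ + ‖hg.toLp _‖) := hfinal
    _ = max 1 C0 * (Real.sqrt (∫ x in T, ‖curl3 v₀ x‖ ^ 2) +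
          Real.sqrt (∫ x in frontier T, ‖g x‖ ^ 2 ∂μH[2])) := by
        rw [norm_toLp_eq hcurl, norm_toLp_eq hg]
end

section
/- (Fubini bound for integrals of functions of the orthogonal projection onto a hyperplane.) Let H ⊂ ℝⁿ be an affine subspace of dimension n−1, let P : ℝⁿ → ℝⁿ denote the orthogonal projection onto H, and let T ⊂ ℝⁿ be a bounded Lebesgue-measurable set. Then for every measurable function g : ℝⁿ → [0, ∞], ∫_T g(P(X)) dX ≤ diam(T) · ∫_{P(cl T)} g dμH^{n−1}, where cl T is the closure of T, the left integral is with respect to Lebesgue measure on ℝⁿ, and the right integral is with respect to (n−1)-dimensional Hausdorff measure restricted to the compact set P(cl T) ⊆ H. -/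
open MeasureTheory

set_option maxHeartbeats 1000000 in
open Set in
theorem stmt11_aux (d : ℕ) (H : AffineSubspace ℝ (EuclideanSpace ℝ (Fin (d+1))))
    (hHne : (H : Set (EuclideanSpace ℝ (Fin (d+1)))).Nonempty)
    (hHdim : Module.finrank ℝ H.direction = d)
    (P : EuclideanSpace ℝ (Fin (d+1)) → EuclideanSpace ℝ (Fin (d+1)))
    (hP : ∀ X, P X ∈ H ∧ ∀ y ∈ H, dist X (P X) ≤ dist X y)
    (T : Set (EuclideanSpace ℝ (Fin (d+1))))
    (hTb : Bornology.IsBounded T) (hTm : MeasurableSet T)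
    (g : EuclideanSpace ℝ (Fin (d+1)) → ENNReal) (hg : Measurable g) :
    ∫⁻ X in T, g (P X) ≤
      ENNReal.ofReal (Metric.diam T) *
        ∫⁻ y in P '' closure T, g y ∂(μH[(d : ℝ)]) := by
  classical
  obtain ⟨p₀, hp₀⟩ := hHne
  -- adapted orthonormal basis
  obtain ⟨B, hB⟩ : ∃ B : OrthonormalBasis (Fin (d+1)) ℝ (EuclideanSpace ℝ (Fin (d+1))),
      ∀ i : Fin (d+1), i ≠ Fin.last d → B i ∈ H.direction := by
    set D := H.direction
    let b₀ : OrthonormalBasis (Fin d) ℝ D :=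
      (stdOrthonormalBasis ℝ D).reindex (finCongr (by rw [hHdim]))
    let v : Fin (d+1) → EuclideanSpace ℝ (Fin (d+1)) :=
      fun i => if h : i = Fin.last d then 0 else (b₀ (i.castPred h) : EuclideanSpace ℝ (Fin (d+1)))
    have hco : Orthonormal ℝ (fun j : Fin d => (b₀ j : EuclideanSpace ℝ (Fin (d+1)))) :=
      b₀.orthonormal.comp_linearIsometry D.subtypeₗᵢ
    have hv : Orthonormal ℝ (Set.restrict {i | i ≠ Fin.last d} v) := by
      have hinj : Function.Injective
          (fun i : {i : Fin (d+1) | i ≠ Fin.last d} => (i : Fin (d+1)).castPred i.2) := by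
        intro a b hab
        exact Subtype.ext (by simpa [Fin.castPred_inj] using hab)
      have := hco.comp _ hinj
      convert this using 1
      funext i
      exact dif_neg i.2
    obtain ⟨B, hB⟩ := hv.exists_orthonormalBasis_extension_of_card_eq
      (by simp [finrank_euclideanSpace])
    refine ⟨B, fun i hi => ?_⟩
    rw [hB i hi]
    simp only [v, dif_neg hi]
    exact (b₀ (i.castPred hi)).2
  -- B last is orthogonal to the direction
  have hBlast : ∀ u ∈ H.direction, inner ℝ (B (Fin.last d)) u = (0:ℝ) := by
    have hw : Orthonormal ℝ (fun i : Fin d => B i.castSucc) :=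
      B.orthonormal.comp _ (Fin.castSucc_injective d)
    have hmem : ∀ i : Fin d, B i.castSucc ∈ H.direction :=
      fun i => hB _ (Fin.castSucc_lt_last i).ne
    have hspan : Submodule.span ℝ (Set.range fun i : Fin d => B i.castSucc) = H.direction := by
      apply Submodule.eq_of_le_of_finrank_le
      · rw [Submodule.span_le]; rintro _ ⟨i, rfl⟩; exact hmem i
      · rw [hHdim, finrank_span_eq_card hw.linearIndependent]
        simp
    intro u hu
    rw [← hspan] at hu
    induction hu using Submodule.span_induction with
    | mem x hx =>
        obtain ⟨i, rfl⟩ := hx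
        exact B.orthonormal.2 (Fin.castSucc_lt_last i).ne.symm
    | zero => simp
    | add x y _ _ hx hy => rw [inner_add_right, hx, hy, add_zero]
    | smul c x _ hx => rw [inner_smul_right, hx, mul_zero]
  -- the parametrization
  set Ψ : EuclideanSpace ℝ (Fin (d+1)) → EuclideanSpace ℝ (Fin (d+1)) :=
    fun x => p₀ + B.repr.symm x with hΨdef
  have hΨiso : Isometry Ψ := by
    apply Isometry.of_dist_eq
    intro a b
    simp only [Ψ, dist_add_left]
    exact B.repr.symm.dist_map a b
  have mpΨ : MeasurePreserving Ψ volume volume :=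
    (measurePreserving_add_left volume p₀).comp B.measurePreserving_repr_symm
  let Ψm : EuclideanSpace ℝ (Fin (d+1)) ≃ᵐ EuclideanSpace ℝ (Fin (d+1)) :=
    (B.repr.symm.toHomeomorph.trans (Homeomorph.addLeft p₀)).toMeasurableEquiv
  have hΨm : ⇑Ψm = Ψ := by
    funext x; simp [Ψm, Ψ]
  set pr : EuclideanSpace ℝ (Fin (d+1)) → EuclideanSpace ℝ (Fin (d+1)) :=
    fun x => WithLp.toLp 2 (Function.update x (Fin.last d) 0) with hprdef
  have hprm : Measurable pr := by
    refine (MeasurableEquiv.toLp 2 (Fin (d+1) → ℝ)).measurable.comp (f := fun x : EuclideanSpace ℝ (Fin (d+1)) => Function.update x.ofLp (Fin.last d) 0) ?_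
    apply measurable_pi_lambda
    intro i
    by_cases h : i = Fin.last d
    · subst h; simp only [Function.update_self]; exact measurable_const
    · simp only [Function.update_of_ne h]; exact (measurable_pi_apply i).comp (MeasurableEquiv.toLp 2 (Fin (d+1) → ℝ)).symm.measurable
  have hprcont : Continuous pr := (PiLp.continuous_toLp 2 _).comp ((PiLp.continuous_ofLp 2 _).update (Fin.last d) continuous_const)
  -- membership
  have hmemD : ∀ z : EuclideanSpace ℝ (Fin (d+1)), z (Fin.last d) = 0 →
      B.repr.symm z ∈ H.direction := by
    intro z hz
    rw [← B.sum_repr_symm, Fin.sum_univ_castSucc, hz, zero_smul, add_zero]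
    exact Submodule.sum_mem _ fun i _ =>
      Submodule.smul_mem _ _ (hB _ (Fin.castSucc_lt_last i).ne)
  have hΨH : ∀ z : EuclideanSpace ℝ (Fin (d+1)), z (Fin.last d) = 0 → Ψ z ∈ H := by
    intro z hz
    have := AffineSubspace.vadd_mem_of_mem_direction (hmemD z hz) hp₀
    simpa [Ψ, add_comm] using this
  have hback : ∀ y ∈ H, (B.repr (y - p₀)) (Fin.last d) = 0 := by
    intro y hy
    rw [B.repr_apply_apply]
    exact hBlast _ (AffineSubspace.vsub_mem_direction hy hp₀)
  have hdist : ∀ x z : EuclideanSpace ℝ (Fin (d+1)),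
      dist x z ^ 2 = ∑ i, (x i - z i)^2 := by
    intro x z
    rw [EuclideanSpace.dist_eq, Real.sq_sqrt (by positivity)]
    simp [Real.dist_eq, sq_abs]
  -- the projection formula
  have hPΨ : ∀ x, P (Ψ x) = Ψ (pr x) := by
    intro x
    have hy := (hP (Ψ x)).1
    set z : EuclideanSpace ℝ (Fin (d+1)) := B.repr (P (Ψ x) - p₀) with hzdef
    have hΨz : Ψ z = P (Ψ x) := by simp [Ψ, hzdef]
    have hzl : z (Fin.last d) = 0 := hback _ hy
    have hprl : (pr x) (Fin.last d) = 0 := Function.update_self _ _ _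
    have hprc : ∀ i : Fin d, (pr x) i.castSucc = x i.castSucc := fun i =>
      Function.update_of_ne (Fin.castSucc_lt_last i).ne _ _
    have hle : dist x z ≤ dist x (pr x) := by
      have h2 := (hP (Ψ x)).2 (Ψ (pr x)) (hΨH _ hprl)
      rwa [← hΨz, hΨiso.dist_eq, hΨiso.dist_eq] at h2
    have hsq : ∑ i, (x i - z i)^2 ≤ ∑ i, (x i - pr x i)^2 := by
      rw [← hdist, ← hdist]
      exact pow_le_pow_left₀ dist_nonneg hle 2
    rw [Fin.sum_univ_castSucc, Fin.sum_univ_castSucc, hzl, hprl] at hsq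
    have hsum0 : ∑ i : Fin d, (x i.castSucc - pr x i.castSucc)^2 = 0 := by
      simp [hprc]
    rw [hsum0, zero_add] at hsq
    have hterm : ∀ i : Fin d, (x i.castSucc - z i.castSucc)^2 = 0 := by
      have hle0 : ∑ i : Fin d, (x i.castSucc - z i.castSucc)^2 ≤ 0 := by linarith
      have heq0 : ∑ i : Fin d, (x i.castSucc - z i.castSucc)^2 = 0 :=
        le_antisymm hle0 (Finset.sum_nonneg fun i _ => sq_nonneg _)
      intro i
      exact (Finset.sum_eq_zero_iff_of_nonneg
        (fun (i : Fin d) _ => sq_nonneg (x i.castSucc - z i.castSucc))).1 heq0 i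
        (Finset.mem_univ i)
    have hz_eq : z = pr x := by
      ext i
      induction i using Fin.lastCases with
      | last => rw [hzl, hprl]
      | cast i =>
          have := hterm i
          rw [pow_eq_zero_iff (by norm_num), sub_eq_zero] at this
          rw [← this, hprc]
    rw [← hΨz, hz_eq]
  -- continuity of P, compactness of K
  have hΨsurj : ∀ X, Ψ (B.repr (X - p₀)) = X := by
    intro X; simp [Ψ]
  have hPeq : P = fun X => Ψ (pr (B.repr (X - p₀))) := by
    funext X
    conv_lhs => rw [← hΨsurj X]
    rw [hPΨ]
  have hPcont : Continuous P := by
    rw [hPeq]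
    exact (hΨiso.continuous.comp hprcont).comp
      (B.repr.continuous.comp (continuous_id.sub continuous_const))
  set K : Set (EuclideanSpace ℝ (Fin (d+1))) := P '' closure T with hKdef
  have hKcp : IsCompact K := (hTb.isCompact_closure).image hPcont
  have hKm : MeasurableSet K := hKcp.isClosed.measurableSet
  -- change of variables
  have hT'm : MeasurableSet (Ψ ⁻¹' T) := hTm.preimage mpΨ.measurable
  set F : EuclideanSpace ℝ (Fin (d+1)) → ENNReal :=
    (Ψ ⁻¹' T).indicator fun x => g (Ψ (pr x)) with hFdef
  have hFm : Measurable F :=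
    ((hg.comp (mpΨ.measurable.comp hprm))).indicator hT'm
  have step1 : ∫⁻ X in T, g (P X) = ∫⁻ x, F x := by
    rw [hFdef, lintegral_indicator hT'm _]
    rw [← hΨm, ← mpΨ.setLIntegral_comp_preimage_emb Ψm.measurableEmbedding (fun X => g (P X)) T]
    rw [hΨm]
    congr 1
    funext x
    rw [hPΨ]
  -- to pi-land
  set q := (MeasurableEquiv.toLp 2 (Fin (d+1) → ℝ)).symm with hqdef
  have mpq : MeasurePreserving ⇑q volume volume :=
    EuclideanSpace.volume_preserving_symm_measurableEquiv_toLp _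
  set π := MeasurableEquiv.piFinSuccAbove (fun _ : Fin (d+1) => ℝ) (Fin.last d) with hπdef
  have mpπ : MeasurePreserving ⇑π volume volume := volume_preserving_piFinSuccAbove _ _
  set e : ℝ → (Fin d → ℝ) → EuclideanSpace ℝ (Fin (d+1)) :=
    fun t y => q.symm (π.symm (t, y)) with hedef
  have he_last : ∀ t y, e t y (Fin.last d) = t := by
    intro t y
    simp [hedef, hπdef, hqdef, MeasurableEquiv.piFinSuccAbove_symm_apply]
  have he_cast : ∀ t y (i : Fin d), e t y i.castSucc = y i := by
    intro t y i
    simp [hedef, hπdef, hqdef, MeasurableEquiv.piFinSuccAbove_symm_apply]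
  have hpr_e : ∀ t y, pr (e t y) = e 0 y := by
    intro t y
    ext i
    induction i using Fin.lastCases with
    | last => rw [he_last]; exact Function.update_self _ _ _
    | cast i =>
        rw [hprdef]
        simp only
        rw [Function.update_of_ne (Fin.castSucc_lt_last i).ne, he_cast, he_cast]
  have he_meas : ∀ y, Measurable fun t => e t y := by
    intro y
    exact (q.symm.measurable.comp π.symm.measurable).comp
      (measurable_id.prodMk measurable_const)
  have he_dist : ∀ y t₁ t₂, dist (e t₁ y) (e t₂ y) = dist t₁ t₂ := by
    intro y t₁ t₂
    have hsum : ∑ i, dist (e t₁ y i) (e t₂ y i) ^ 2 = dist t₁ t₂ ^ 2 := by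
      rw [Fin.sum_univ_castSucc]
      simp [he_cast, he_last]
    rw [EuclideanSpace.dist_eq, hsum, Real.sqrt_sq dist_nonneg]
  set j : (Fin d → ℝ) → EuclideanSpace ℝ (Fin (d+1)) := fun y => Ψ (e 0 y) with hjdef
  have hjm : Measurable j := by
    exact mpΨ.measurable.comp ((q.symm.measurable.comp π.symm.measurable).comp
      (measurable_const.prodMk measurable_id))
  -- Fubini
  have step2 : ∫⁻ x, F x = ∫⁻ p : ℝ × (Fin d → ℝ), F (e p.1 p.2) := by
    have hfe : (fun p : ℝ × (Fin d → ℝ) => F (e p.1 p.2)) = fun p => F (q.symm (π.symm p)) := by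
      funext p
      rw [hedef]
    rw [hfe]
    exact ((mpq.symm q).lintegral_comp (f := F) hFm).symm.trans
      (((mpπ.symm π).lintegral_comp (f := fun a => F (q.symm a))
        (hFm.comp q.symm.measurable)).symm)
  have step3 : ∫⁻ p : ℝ × (Fin d → ℝ), F (e p.1 p.2) =
      ∫⁻ y : Fin d → ℝ, ∫⁻ t : ℝ, F (e t y) := by
    rw [Measure.volume_eq_prod, lintegral_prod_symm]
    exact ((hFm.comp (q.symm.measurable.comp π.symm.measurable)).comp
      measurable_id).aemeasurable
  have hsec_meas : ∀ y : Fin d → ℝ, MeasurableSet {t : ℝ | e t y ∈ Ψ ⁻¹' T} :=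
    fun y => (he_meas y) hT'm
  have hinner : ∀ y : Fin d → ℝ, ∫⁻ t : ℝ, F (e t y) =
      g (j y) * volume {t : ℝ | e t y ∈ Ψ ⁻¹' T} := by
    intro y
    have hptw : ∀ t : ℝ, F (e t y) =
        {t : ℝ | e t y ∈ Ψ ⁻¹' T}.indicator (fun _ => g (j y)) t := by
      intro t
      by_cases h : e t y ∈ Ψ ⁻¹' T
      · rw [hFdef, indicator_of_mem h, indicator_of_mem (by exact h), hpr_e, hjdef]
      · rw [hFdef, indicator_of_notMem h, indicator_of_notMem (by exact h)]
    simp_rw [hptw]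
    rw [lintegral_indicator_const (hsec_meas y)]
  -- section bounds
  have hvol : ∀ y : Fin d → ℝ, volume {t : ℝ | e t y ∈ Ψ ⁻¹' T} ≤
      ENNReal.ofReal (Metric.diam T) := by
    intro y
    refine le_trans (Real.volume_le_diam _) ?_
    have hd2 : Metric.ediam {t : ℝ | e t y ∈ Ψ ⁻¹' T} ≤ Metric.ediam T := by
      refine EMetric.diam_le fun t₁ h₁ t₂ h₂ => ?_
      have h12 : edist t₁ t₂ = edist (Ψ (e t₁ y)) (Ψ (e t₂ y)) := by
        rw [hΨiso.edist_eq, edist_dist, edist_dist, he_dist]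
      rw [h12]
      exact EMetric.edist_le_diam_of_mem h₁ h₂
    refine hd2.trans_eq ?_
    rw [Metric.diam, ENNReal.ofReal_toReal hTb.ediam_ne_top]
  have hKmem : ∀ y : Fin d → ℝ, {t : ℝ | e t y ∈ Ψ ⁻¹' T}.Nonempty → j y ∈ K := by
    rintro y ⟨t, ht⟩
    refine ⟨Ψ (e t y), subset_closure ht, ?_⟩
    rw [hPΨ, hpr_e]
  have step4 : ∫⁻ y : Fin d → ℝ, g (j y) * volume {t : ℝ | e t y ∈ Ψ ⁻¹' T} ≤
      ENNReal.ofReal (Metric.diam T) * ∫⁻ y in j ⁻¹' K, g (j y) := by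
    have hptw : ∀ y : Fin d → ℝ, g (j y) * volume {t : ℝ | e t y ∈ Ψ ⁻¹' T} ≤
        ENNReal.ofReal (Metric.diam T) * (j ⁻¹' K).indicator (fun y => g (j y)) y := by
      intro y
      by_cases hne : {t : ℝ | e t y ∈ Ψ ⁻¹' T}.Nonempty
      · rw [indicator_of_mem (show y ∈ j ⁻¹' K from hKmem y hne), mul_comm]
        exact mul_le_mul_left (hvol y) _
      · rw [not_nonempty_iff_eq_empty] at hne
        rw [hne]
        simp
    calc ∫⁻ y : Fin d → ℝ, g (j y) * volume {t : ℝ | e t y ∈ Ψ ⁻¹' T}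
        ≤ ∫⁻ y : Fin d → ℝ, ENNReal.ofReal (Metric.diam T) *
            (j ⁻¹' K).indicator (fun y => g (j y)) y := lintegral_mono hptw
      _ = ENNReal.ofReal (Metric.diam T) *
            ∫⁻ y : Fin d → ℝ, (j ⁻¹' K).indicator (fun y => g (j y)) y :=
          lintegral_const_mul' _ _ ENNReal.ofReal_ne_top
      _ = ENNReal.ofReal (Metric.diam T) * ∫⁻ y in j ⁻¹' K, g (j y) := by
          rw [lintegral_indicator (hjm hKm) _]
  -- comparison with Hausdorff measure
  have hjanti : AntilipschitzWith 1 j := by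
    refine AntilipschitzWith.of_le_mul_dist fun y₁ y₂ => ?_
    rw [NNReal.coe_one, one_mul, hjdef]
    simp only
    rw [hΨiso.dist_eq]
    refine dist_pi_le_iff dist_nonneg |>.2 fun i => ?_
    have hterm : dist (y₁ i) (y₂ i) ^ 2 ≤ ∑ k, dist (e 0 y₁ k) (e 0 y₂ k) ^ 2 := by
      refine Finset.single_le_sum (f := fun k => dist (e 0 y₁ k) (e 0 y₂ k) ^ 2)
        (fun k _ => by positivity) (Finset.mem_univ i.castSucc) |>.trans_eq' ?_
      rw [he_cast, he_cast]
    rw [EuclideanSpace.dist_eq]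
    calc dist (y₁ i) (y₂ i) = Real.sqrt (dist (y₁ i) (y₂ i) ^ 2) :=
          (Real.sqrt_sq dist_nonneg).symm
      _ ≤ _ := Real.sqrt_le_sqrt hterm
  have hpiH : (μH[(d:ℝ)] : Measure (Fin d → ℝ)) = volume := by
    have h := hausdorffMeasure_pi_real (ι := Fin d)
    rwa [Fintype.card_fin] at h
  have hcomp : ∀ u : Set (EuclideanSpace ℝ (Fin (d+1))),
      volume (j ⁻¹' u) ≤ μH[(d:ℝ)] u := by
    intro u
    rw [← hpiH]
    refine le_trans (hjanti.le_hausdorffMeasure_image (Nat.cast_nonneg d) (j ⁻¹' u)) ?_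
    rw [ENNReal.coe_one, ENNReal.one_rpow, one_mul]
    exact measure_mono (image_preimage_subset _ _)
  have step5 : ∫⁻ y in j ⁻¹' K, g (j y) ≤ ∫⁻ z in K, g z ∂(μH[(d:ℝ)]) := by
    rw [← lintegral_map hg hjm]
    refine lintegral_mono' (Measure.le_iff.2 fun s hs => ?_) le_rfl
    rw [Measure.map_apply hjm hs, Measure.restrict_apply (hjm hs),
      Measure.restrict_apply hs, ← preimage_inter]
    exact hcomp (s ∩ K)
  calc ∫⁻ X in T, g (P X) = ∫⁻ y : Fin d → ℝ, ∫⁻ t : ℝ, F (e t y) := by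
        rw [step1, step2, step3]
    _ = ∫⁻ y : Fin d → ℝ, g (j y) * volume {t : ℝ | e t y ∈ Ψ ⁻¹' T} := by
        simp_rw [hinner]
    _ ≤ ENNReal.ofReal (Metric.diam T) * ∫⁻ y in j ⁻¹' K, g (j y) := step4
    _ ≤ ENNReal.ofReal (Metric.diam T) * ∫⁻ z in K, g z ∂(μH[(d:ℝ)]) :=
        mul_le_mul_right step5 _

/-- Fubini bound for integrals of functions of the orthogonal projection onto a hyperplane:
if `P` is the nearest-point projection onto an affine subspace `H ⊂ ℝⁿ` of dimension `n−1`
and `T` is a bounded measurable set, then for every measurable `g : ℝⁿ → [0,∞]`,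
`∫_T g(P X) dX ≤ diam(T) · ∫_{P(cl T)} g dμH^{n−1}`. -/
theorem stmt11 (n : ℕ) (H : AffineSubspace ℝ (EuclideanSpace ℝ (Fin n)))
    (hHne : (H : Set (EuclideanSpace ℝ (Fin n))).Nonempty)
    (hHdim : Module.finrank ℝ H.direction + 1 = n)
    (P : EuclideanSpace ℝ (Fin n) → EuclideanSpace ℝ (Fin n))
    (hP : ∀ X, P X ∈ H ∧ ∀ y ∈ H, dist X (P X) ≤ dist X y)
    (T : Set (EuclideanSpace ℝ (Fin n)))
    (hTb : Bornology.IsBounded T) (hTm : MeasurableSet T)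
    (g : EuclideanSpace ℝ (Fin n) → ENNReal) (hg : Measurable g) :
    ∫⁻ X in T, g (P X) ≤
      ENNReal.ofReal (Metric.diam T) *
        ∫⁻ y in P '' closure T, g y ∂(μH[(n : ℝ) - 1]) := by
  cases n with
  | zero => exact absurd hHdim (Nat.succ_ne_zero _)
  | succ d =>
    have hd : Module.finrank ℝ H.direction = d := Nat.succ_injective hHdim
    have hexp : ((d+1 : ℕ) : ℝ) - 1 = (d:ℝ) := by push_cast; ring
    rw [hexp]
    exact stmt11_aux d H hHne hd P hP T hTb hTm g hg
end
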